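/- arXiv:math-ph/0303063 — 11 statements merged into one kernel-verified Lean document; each statement's English description precedes it below -/
import Mathlib

section
/- (Second trace identity for ellipsoidal coordinates) Let N ≥ 1, γ₁ < ⋯ < γ_N real, ν₁,…,ν_N > 0, Υ(λ) = Σ_{k=1}^{N} ν_k/(γ_k − λ), and let C ≠ 0 be real. If χ₁ < ⋯ < χ_N are the N real solutions of Υ(λ) = C, then C² · Σ_{k=1}^{N} (γ_k² − χ_k²) = 2 s₁ C − s₀², where s₀ = Σ_{k=1}^{N} ν_k and s₁ = Σ_{k=1}^{N} ν_k γ_k. -/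
/-!
Let `G` and `H` be the monic polynomials with roots `γ_k` and `χ_k`. The equations
`Υ(χ_j) = C` say that `C • (G - H) + ∑ ν_k • G / (X - γ_k)`, a polynomial of degree `< N`,
vanishes at the `N` distinct points `χ_j`, so it is zero. Its coefficients of `X^(N-1)` and
`X^(N-2)` give `C (e₁(γ) - e₁(χ)) = s₀` and `C (e₂(γ) - e₂(χ)) = s₀ e₁(γ) - s₁`; with
`2 e₂ = e₁² - ∑ x²`, eliminating `e₁(χ)` leaves the identity.
-/

open Polynomial Finset Lagrange

section Coefficients

variable {R ι : Type*} [CommRing R] (s : Finset ι) (v : ι → R)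

theorem coeff_nodal_card : (nodal s v).coeff #s = 1 := by
  nontriviality R
  simpa only [natDegree_nodal] using (nodal_monic (s := s) (v := v)).coeff_natDegree

/- Reading the coefficient of `X ^ #s` of `X * nodal s v` and `X ^ 2 * nodal s v` gives the
coefficients of `X ^ (#s - 1)` and `X ^ (#s - 2)` of `nodal s v` without truncated subtraction,
so that `#s ≤ 1` needs no separate case. -/
theorem coeff_X_mul_nodal_card : (X * nodal s v).coeff #s = -∑ i ∈ s, v i := by
  rcases s.eq_empty_or_nonempty with rfl | hs
  · simp
  obtain ⟨n, hn⟩ : ∃ n, #s = n + 1 := Nat.exists_eq_succ_of_ne_zero hs.card_pos.ne'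
  rw [hn, coeff_X_mul, nodal_eq, ← prod_X_sub_C_coeff_card_pred s v hs.card_pos, hn,
    Nat.add_sub_cancel]

theorem two_mul_coeff_X_sq_mul_nodal_card [DecidableEq ι] :
    2 * (X ^ 2 * nodal s v).coeff #s = (∑ i ∈ s, v i) ^ 2 - ∑ i ∈ s, v i ^ 2 := by
  induction s using Finset.induction_on with
  | empty => simp
  | insert a t ha ih =>
    have h : X ^ 2 * nodal (insert a t) v
        = X * (X ^ 2 * nodal t v) - C (v a) * (X * (X * nodal t v)) := by
      rw [nodal_insert_eq_nodal ha]; ring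
    rw [h, card_insert_of_notMem ha, coeff_sub, coeff_X_mul, coeff_C_mul, coeff_X_mul,
      coeff_X_mul_nodal_card, sum_insert ha, sum_insert ha]
    linear_combination ih

theorem degree_nodal_sub_nodal_lt [Nontrivial R] (w : ι → R) :
    (nodal s v - nodal s w).degree < #s := by
  simpa only [degree_nodal] using degree_sub_lt_left (degree_nodal.trans degree_nodal.symm)
    (nodal_ne_zero (s := s) (v := v))
    (nodal_monic.leadingCoeff.trans nodal_monic.leadingCoeff.symm)

end Coefficients

theorem smul_nodal_eq_of_sum_div_eq {F ι : Type*} [Field F] [Fintype ι] [DecidableEq ι]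
    {γ ν χ : ι → F} {c : F} (hχ : Function.Injective χ) (hne : ∀ j k, χ j ≠ γ k)
    (hroot : ∀ j, ∑ k, ν k / (γ k - χ j) = c) :
    c • nodal univ χ = c • nodal univ γ + ∑ k, ν k • nodal (univ.erase k) γ := by
  refine eq_of_degree_sub_lt_of_eval_index_eq univ hχ.injOn ?_ fun j _ => ?_
  · have hlt : ∀ k, nodal (univ.erase k) γ ∈ degreeLT F #(univ : Finset ι) := fun k => by
      rw [mem_degreeLT, degree_nodal, ← card_erase_add_one (mem_univ k)]
      exact_mod_cast Nat.lt_succ_self _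
    rw [← mem_degreeLT, sub_add_eq_sub_sub, ← smul_sub]
    exact sub_mem (Submodule.smul_mem _ c (mem_degreeLT.2 (degree_nodal_sub_nodal_lt _ _ _)))
      (sum_mem fun k _ => Submodule.smul_mem _ (ν k) (hlt k))
  · set P := eval (χ j) (nodal univ γ) with hP
    have hQ : ∀ k, eval (χ j) (nodal (univ.erase k) γ) = P / (χ j - γ k) := fun k => by
      rw [eq_div_iff (sub_ne_zero.2 (hne j k)), mul_comm, hP,
        nodal_eq_mul_nodal_erase (mem_univ k), eval_mul, eval_sub, eval_X, eval_C]
    have hterm : ∀ k, ν k * (P / (χ j - γ k)) = -(P * (ν k / (γ k - χ j))) := fun k => by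
      rw [← neg_sub (γ k), div_neg]; ring
    simp only [eval_smul, eval_add, eval_finsetSum, eval_nodal_at_node (mem_univ j), hQ,
      smul_eq_mul, hterm, sum_neg_distrib, ← mul_sum, hroot]
    ring

section TraceIdentities

variable {R ι : Type*} [CommRing R] [Fintype ι] [DecidableEq ι] {γ ν χ : ι → R} {c : R}

theorem mul_sum_sub_eq_sum_of_smul_nodal_eq
    (h : c • nodal univ χ = c • nodal univ γ + ∑ k, ν k • nodal (univ.erase k) γ) :
    c * ∑ k, (γ k - χ k) = ∑ k, ν k := by
  have hk : ∀ k, (X * nodal (univ.erase k) γ).coeff #(univ : Finset ι) = 1 := fun k => by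
    rw [← card_erase_add_one (mem_univ k), coeff_X_mul, coeff_nodal_card]
  have e := congrArg (fun p => (X * p).coeff #(univ : Finset ι)) h
  simp only [mul_add, mul_sum, mul_smul_comm, coeff_add, coeff_smul, finsetSum_coeff,
    coeff_X_mul_nodal_card, hk, smul_eq_mul, mul_one] at e
  rw [sum_sub_distrib]
  linear_combination e

theorem mul_sum_sq_sub_eq_of_smul_nodal_eq
    (h : c • nodal univ χ = c • nodal univ γ + ∑ k, ν k • nodal (univ.erase k) γ) :
    c * ∑ k, (γ k ^ 2 - χ k ^ 2) = c * ((∑ k, γ k) ^ 2 - (∑ k, χ k) ^ 2)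
      + 2 * (∑ k, ν k * γ k - (∑ k, ν k) * ∑ k, γ k) := by
  have hk : ∀ k, (X ^ 2 * nodal (univ.erase k) γ).coeff #(univ : Finset ι)
      = γ k - ∑ i, γ i := fun k => by
    rw [← card_erase_add_one (mem_univ k), pow_two, mul_assoc, coeff_X_mul,
      coeff_X_mul_nodal_card, sum_erase_eq_sub (mem_univ k)]
    ring
  have e := congrArg (fun p => 2 * (X ^ 2 * p).coeff #(univ : Finset ι)) h
  simp only [mul_add, mul_sum, mul_smul_comm, coeff_add, coeff_smul, finsetSum_coeff, hk,
    smul_eq_mul] at e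
  rw [mul_left_comm _ c, mul_left_comm _ c, two_mul_coeff_X_sq_mul_nodal_card,
    two_mul_coeff_X_sq_mul_nodal_card] at e
  have hsum : ∑ k, 2 * (ν k * (γ k - ∑ i, γ i))
      = 2 * (∑ k, ν k * γ k - (∑ k, ν k) * ∑ k, γ k) := by
    simp only [mul_sub, sum_sub_distrib, ← mul_sum, sum_mul]
  rw [sum_sub_distrib]
  linear_combination e + hsum

end TraceIdentities

theorem stmt_2_general (N : ℕ) (γ ν : Fin N → ℝ)
    (C : ℝ) (χ : Fin N → ℝ) (hχ : StrictMono χ)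
    (hne : ∀ j k, χ j ≠ γ k)
    (hroot : ∀ j, ∑ k, ν k / (γ k - χ j) = C) :
    C ^ 2 * ∑ k, (γ k ^ 2 - χ k ^ 2)
      = 2 * (∑ k, ν k * γ k) * C - (∑ k, ν k) ^ 2 := by
  have h := smul_nodal_eq_of_sum_div_eq hχ.injective hne hroot
  have h₁ := mul_sum_sub_eq_sum_of_smul_nodal_eq h
  have h₂ := mul_sum_sq_sub_eq_of_smul_nodal_eq h
  rw [sum_sub_distrib] at h₁
  linear_combination C * h₂ + (C * (∑ k, γ k + ∑ k, χ k) - ∑ k, ν k) * h₁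

/-- Second trace identity for ellipsoidal coordinates:
if `χ₁ < ⋯ < χ_N` are the `N` real solutions of `∑ ν_k/(γ_k - λ) = C` with `C ≠ 0`,
then `C² · ∑ (γ_k² - χ_k²) = 2 s₁ C - s₀²` where `s₀ = ∑ ν_k`, `s₁ = ∑ ν_k γ_k`. -/
theorem stmt_2 (N : ℕ) (hN : 1 ≤ N) (γ ν : Fin N → ℝ)
    (hγ : StrictMono γ) (hν : ∀ k, 0 < ν k)
    (C : ℝ) (hC : C ≠ 0) (χ : Fin N → ℝ) (hχ : StrictMono χ)
    (hne : ∀ j k, χ j ≠ γ k)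
    (hroot : ∀ j, ∑ k, ν k / (γ k - χ j) = C) :
    C ^ 2 * ∑ k, (γ k ^ 2 - χ k ^ 2)
      = 2 * (∑ k, ν k * γ k) * C - (∑ k, ν k) ^ 2 :=
  stmt_2_general N γ ν C χ hχ hne hroot
end

section
/- (Converse for finite Jacobi ellipsoidal coordinates) Let N ≥ 1 and let γ₁ < ⋯ < γ_N be fixed real numbers. Let C > 0 and let χ₁ < ⋯ < χ_N be real numbers satisfying the interlacing χ₁ < γ₁ < χ₂ < γ₂ < ⋯ < χ_N < γ_N (respectively, let C < 0 and γ₁ < χ₁ < γ₂ < ⋯ < γ_N < χ_N). Then there exists a unique vector (ν₁,…,ν_N) with all ν_k > 0 such that Σ_{k=1}^{N} ν_k/(γ_k − χ_j) = C for every j = 1,…,N. -/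
/-!
Writing `w_k = ∏_{l ≠ k} (γ_k - γ_l)⁻¹` for the nodal weights, `∏_l (λ - γ_l) · Σ_k ν_k/(γ_k - λ)`
is minus the Lagrange interpolant through the nodes `γ_k` of the values `ν_k / w_k`, a polynomial
of degree `< N`. The conditions at the `N` points `χ_j` say that it agrees there with
`C (∏_l (λ - γ_l) - ∏_j (λ - χ_j))`, which also has degree `< N`; so the two coincide, and
evaluating at `γ_k` gives the unique solution `ν_k = C w_k ∏_j (γ_k - χ_j)`. Under interlacing
every factor `(γ_k - χ_l) / (γ_k - γ_l)` with `l ≠ k` is positive, so `ν_k` has the sign of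
`C (γ_k - χ_k)`, which is positive in both cases.
-/

open Finset Polynomial Lagrange

section CauchySystem

variable {F ι : Type*} [Field F] [Fintype ι]

theorem degree_nodal_sub_nodal_lt_s3 (γ χ : ι → F) :
    (nodal univ χ - nodal univ γ).degree < Fintype.card ι := by
  calc (nodal univ χ - nodal univ γ).degree < (nodal univ χ).degree :=
        degree_sub_lt_left (by rw [degree_nodal, degree_nodal]) nodal_ne_zero
          (by rw [nodal_monic.leadingCoeff, nodal_monic.leadingCoeff])
    _ = Fintype.card ι := degree_nodal

variable [DecidableEq ι] {γ χ : ι → F}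

theorem sum_nodalWeight_mul_div_sub_eq (r : ι → F) {x : F} (hx : ∀ k, x ≠ γ k) :
    ∑ k, nodalWeight univ γ k * r k / (γ k - x) =
      -(interpolate univ γ r).eval x / (nodal univ γ).eval x := by
  rw [eval_interpolate_not_at_node r fun k _ => hx k,
    neg_mul_eq_mul_neg, mul_div_cancel_left₀ _ (eval_nodal_not_at_node fun k _ => hx k),
    ← sum_neg_distrib]
  refine sum_congr rfl fun k _ => ?_
  rw [← neg_sub x, div_neg, mul_right_comm, div_eq_mul_inv]

noncomputable def jacobiWeights (γ χ : ι → F) (c : F) (k : ι) : F :=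
  c * nodalWeight univ γ k * (nodal univ χ).eval (γ k)

theorem sum_jacobiWeights_div_sub (hγ : Function.Injective γ) (hγχ : ∀ k j, γ k ≠ χ j) (c : F)
    (j : ι) :
    ∑ k, jacobiWeights γ χ c k / (γ k - χ j) = c := by
  have hinterp : interpolate univ γ (fun k => c * (nodal univ χ).eval (γ k)) =
      c • (nodal univ χ - nodal univ γ) := by
    refine (eq_interpolate_of_eval_eq _ hγ.injOn ?_ fun k _ => ?_).symm
    · exact (degree_smul_le _ _).trans_lt (by simpa using degree_nodal_sub_nodal_lt_s3 γ χ)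
    · simp [eval_nodal_at_node (mem_univ k)]
  have hnodal : (nodal univ γ).eval (χ j) ≠ 0 := eval_nodal_not_at_node fun k _ => (hγχ k j).symm
  simp_rw [jacobiWeights, mul_assoc, mul_left_comm c]
  rw [sum_nodalWeight_mul_div_sub_eq _ fun k => (hγχ k j).symm, hinterp]
  simp [eval_nodal_at_node (mem_univ j), hnodal]

theorem eq_zero_of_sum_div_sub_eq_zero (hγ : Function.Injective γ) (hχ : Function.Injective χ)
    (hγχ : ∀ k j, γ k ≠ χ j) {ν : ι → F} (h : ∀ j, ∑ k, ν k / (γ k - χ j) = 0) : ν = 0 := by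
  have hw : ∀ k, nodalWeight univ γ k ≠ 0 := fun k => nodalWeight_ne_zero hγ.injOn (mem_univ k)
  set r : ι → F := fun k => ν k / nodalWeight univ γ k
  have hν : ∀ k, ν k = nodalWeight univ γ k * r k := fun k => (mul_div_cancel₀ _ (hw k)).symm
  have hroots : ∀ j ∈ univ, (interpolate univ γ r).eval (χ j) = 0 := by
    intro j _
    have hx : ∀ k, χ j ≠ γ k := fun k => (hγχ k j).symm
    have := h j
    simp only [hν] at this
    rw [sum_nodalWeight_mul_div_sub_eq r hx, div_eq_zero_iff, neg_eq_zero] at this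
    exact this.resolve_right (eval_nodal_not_at_node fun k _ => hx k)
  have hzero := eq_zero_of_degree_lt_of_eval_index_eq_zero _ hχ.injOn
    (degree_interpolate_lt r hγ.injOn) hroots
  funext k
  rw [hν k, Pi.zero_apply, ← eval_interpolate_at_node r hγ.injOn (mem_univ k), hzero, eval_zero,
    mul_zero]

theorem sum_div_sub_eq_iff_eq_jacobiWeights (hγ : Function.Injective γ) (hχ : Function.Injective χ)
    (hγχ : ∀ k j, γ k ≠ χ j) {c : F} {ν : ι → F} :
    (∀ j, ∑ k, ν k / (γ k - χ j) = c) ↔ ν = jacobiWeights γ χ c := by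
  refine ⟨fun h => sub_eq_zero.mp (eq_zero_of_sum_div_sub_eq_zero hγ hχ hγχ fun j => ?_), ?_⟩
  · simp only [Pi.sub_apply, sub_div, sum_sub_distrib, h j, sum_jacobiWeights_div_sub hγ hγχ,
      sub_self]
  · rintro rfl
    exact sum_jacobiWeights_div_sub hγ hγχ c

theorem jacobiWeights_eq_mul_prod_div (γ χ : ι → F) (c : F) (k : ι) :
    jacobiWeights γ χ c k = c * (γ k - χ k) * ∏ l ∈ univ.erase k, (γ k - χ l) / (γ k - γ l) := by
  rw [jacobiWeights, nodalWeight, eval_nodal, ← mul_prod_erase univ _ (mem_univ k),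
    prod_div_distrib, div_eq_mul_inv, prod_inv_distrib]
  ring

end CauchySystem

section Positivity

variable {F ι : Type*} [Field F] [LinearOrder F] [IsStrictOrderedRing F] {γ χ : ι → F}

theorem jacobiWeights_pos [Fintype ι] [DecidableEq ι] {c : F} {k : ι} (hc : 0 < c * (γ k - χ k))
    (hratio : ∀ l ≠ k, 0 < (γ k - χ l) / (γ k - γ l)) : 0 < jacobiWeights γ χ c k := by
  rw [jacobiWeights_eq_mul_prod_div]
  exact mul_pos hc (prod_pos fun l hl => hratio l (ne_of_mem_erase hl))

variable [LinearOrder ι]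

theorem div_sub_pos_of_interlace (hγ : StrictMono γ) (hbelow : ∀ l k, l < k → χ l < γ k)
    (habove : ∀ k l, k < l → γ k < χ l) {k l : ι} (hlk : l ≠ k) :
    0 < (γ k - χ l) / (γ k - γ l) := by
  rcases hlk.lt_or_gt with h | h
  · exact div_pos (sub_pos.2 (hbelow l k h)) (sub_pos.2 (hγ h))
  · exact div_pos_of_neg_of_neg (sub_neg.2 (habove k l h)) (sub_neg.2 (hγ h))

theorem existsUnique_pos_sum_div_sub_eq [Fintype ι] (hγ : StrictMono γ)
    (hχ : Function.Injective χ) {c : F} (hc : ∀ k, 0 < c * (γ k - χ k))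
    (hbelow : ∀ l k, l < k → χ l < γ k) (habove : ∀ k l, k < l → γ k < χ l) :
    ∃! ν : ι → F, (∀ k, 0 < ν k) ∧ ∀ j, ∑ k, ν k / (γ k - χ j) = c := by
  have hγχ : ∀ k j, γ k ≠ χ j := by
    intro k j
    rcases lt_trichotomy j k with h | rfl | h
    · exact (hbelow j k h).ne'
    · exact fun he => (hc j).ne' (by rw [he, sub_self, mul_zero])
    · exact (habove k j h).ne
  have hsolve := fun ν => sum_div_sub_eq_iff_eq_jacobiWeights hγ.injective hχ hγχ (c := c) (ν := ν)
  refine ⟨jacobiWeights γ χ c, ⟨fun k => ?_, (hsolve _).2 rfl⟩, fun ν hν => (hsolve ν).1 hν.2⟩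
  exact jacobiWeights_pos (hc k) fun l hl => div_sub_pos_of_interlace hγ hbelow habove hl

end Positivity

theorem Fin.lt_of_lt_of_forall_succ_lt {α : Type*} [Preorder α] {N : ℕ} {f g : Fin N → α}
    (hg : Monotone g) (h : ∀ i j : Fin N, (i : ℕ) + 1 = (j : ℕ) → f i < g j) {i j : Fin N}
    (hij : i < j) : f i < g j :=
  (h i ⟨i + 1, by omega⟩ rfl).trans_le (hg hij)

theorem stmt_3_general (N : ℕ) (γ : Fin N → ℝ) (hγ : StrictMono γ) :
    (∀ C : ℝ, 0 < C → ∀ χ : Fin N → ℝ, StrictMono χ →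
      (∀ k, χ k < γ k) → (∀ i j : Fin N, (i : ℕ) + 1 = (j : ℕ) → γ i < χ j) →
      ∃! ν : Fin N → ℝ, (∀ k, 0 < ν k) ∧ ∀ j, ∑ k, ν k / (γ k - χ j) = C) ∧
    (∀ C : ℝ, C < 0 → ∀ χ : Fin N → ℝ, StrictMono χ →
      (∀ k, γ k < χ k) → (∀ i j : Fin N, (i : ℕ) + 1 = (j : ℕ) → χ i < γ j) →
      ∃! ν : Fin N → ℝ, (∀ k, 0 < ν k) ∧ ∀ j, ∑ k, ν k / (γ k - χ j) = C) := by
  constructor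
  · intro C hC χ hχ hlt hgt
    exact existsUnique_pos_sum_div_sub_eq hγ hχ.injective (fun k => mul_pos hC (sub_pos.2 (hlt k)))
      (fun l k h => (hχ h).trans (hlt k)) fun k l => Fin.lt_of_lt_of_forall_succ_lt hχ.monotone hgt
  · intro C hC χ hχ hlt hgt
    exact existsUnique_pos_sum_div_sub_eq hγ hχ.injective
      (fun k => mul_pos_of_neg_of_neg hC (sub_neg.2 (hlt k)))
      (fun l k => Fin.lt_of_lt_of_forall_succ_lt hγ.monotone hgt) fun k l h => (hlt k).trans (hχ h)

/-- Converse for finite Jacobi ellipsoidal coordinates: given interlacing data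
(`χ` below the poles for `C > 0`, above for `C < 0`) there is a unique vector of
positive weights `ν` with `∑ ν_k/(γ_k - χ_j) = C` for all `j`. -/
theorem stmt_3 (N : ℕ) (hN : 1 ≤ N) (γ : Fin N → ℝ) (hγ : StrictMono γ) :
    (∀ C : ℝ, 0 < C → ∀ χ : Fin N → ℝ, StrictMono χ →
      (∀ k, χ k < γ k) → (∀ i j : Fin N, (i : ℕ) + 1 = (j : ℕ) → γ i < χ j) →
      ∃! ν : Fin N → ℝ, (∀ k, 0 < ν k) ∧ ∀ j, ∑ k, ν k / (γ k - χ j) = C) ∧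
    (∀ C : ℝ, C < 0 → ∀ χ : Fin N → ℝ, StrictMono χ →
      (∀ k, γ k < χ k) → (∀ i j : Fin N, (i : ℕ) + 1 = (j : ℕ) → χ i < γ j) →
      ∃! ν : Fin N → ℝ, (∀ k, 0 < ν k) ∧ ∀ j, ∑ k, ν k / (γ k - χ j) = C) :=
  stmt_3_general N γ hγ
end

section
/- (Nazarov–Yuditskii, case C < 0) Let (γ_k)_{k≥1} be a strictly increasing sequence of positive real numbers tending to +∞, let C < 0, and let (χ_k)_{k≥1} be a sequence of real numbers with γ_k < χ_k < γ_{k+1} for all k. Then the following are equivalent: (i) there exist positive weights (ν_k)_{k≥1} with Σ_k ν_k/γ_k < ∞ such that Σ_k ν_k/(γ_k − χ_j) = C for every j ≥ 1; (ii) Σ_{k=1}^{∞} (χ_k/γ_k − 1) < ∞. -/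
/-!
Truncate to the first `n` poles. The rational function `∏_{k<n} (χ_k - λ)/(γ_k - λ)` equals
`1 + ∑_{k<n} W_n(k)/(γ_k - λ)` with explicit residues `W_n(k)`; by interlacing they are positive
and increase with `n`. Evaluating at `λ = χ_j` and at `λ = 0` gives
`∑_{k<n} W_n(k)/(γ_k - χ_j) = -1` and `∑_{k<n} W_n(k)/γ_k = ∏_{k<n} χ_k/γ_k - 1`.
If `∑ (χ_k/γ_k - 1) < ∞` the products converge, so `ν = -C · lim_n W_n` exists and solves the
equations by monotone convergence. Conversely, combining the equations for `j < n` with the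
residues of `∏_{k<n} (γ_k - λ)/(χ_k - λ)` (the roles of `γ` and `χ` swapped) yields
`-C (∏_{k<n} χ_k/γ_k - 1) ≤ ∑_{k<n} ν_k/γ_k`, which bounds `∑ (χ_k/γ_k - 1)`.
-/

open Finset Filter Topology

section PartialFractions

open Polynomial Lagrange

variable {ι F : Type*} [DecidableEq ι] [Field F] {s : Finset ι} {p q : ι → F} {k : ι}

/-- The coefficient of `1 / (p k - x)` in the partial fraction expansion of
`∏ j ∈ s, (q j - x) / (p j - x)`, see `prod_div_sub_eq_one_add_sum`. -/
def partialFractionCoeff (s : Finset ι) (p q : ι → F) (k : ι) : F :=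
  (q k - p k) * ∏ j ∈ s.erase k, (q j - p k) / (p j - p k)

theorem partialFractionCoeff_eq_neg_nodalWeight_mul (hk : k ∈ s) :
    partialFractionCoeff s p q k = -(nodalWeight s p k * eval (p k) (nodal s q)) := by
  have hratio : ∀ j ∈ s.erase k, (q j - p k) / (p j - p k) = (p k - q j) * (p k - p j)⁻¹ :=
    fun j _ => by rw [← neg_div_neg_eq, div_eq_mul_inv]; ring_nf
  rw [partialFractionCoeff, prod_congr rfl hratio, prod_mul_distrib, nodalWeight, eval_nodal,
    ← mul_prod_erase s _ hk]
  ring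

theorem prod_div_sub_eq_one_add_sum (hp : Set.InjOn p s) {x : F} (hx : ∀ k ∈ s, x ≠ p k) :
    ∏ k ∈ s, (q k - x) / (p k - x) = 1 + ∑ k ∈ s, partialFractionCoeff s p q k / (p k - x) := by
  have hdeg : (nodal s q - nodal s p).degree < #s := by
    rw [← degree_nodal (v := q)]
    exact degree_sub_lt_left (by rw [degree_nodal, degree_nodal]) nodal_ne_zero
      (by rw [nodal_monic.leadingCoeff, nodal_monic.leadingCoeff])
  have hinterp := congrArg (eval x) (eq_interpolate hp hdeg)
  simp only [eval_interpolate_not_at_node _ hx, eval_sub] at hinterp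
  have hterm : ∀ k ∈ s, nodalWeight s p k * (x - p k)⁻¹ *
      (eval (p k) (nodal s q) - eval (p k) (nodal s p))
        = partialFractionCoeff s p q k / (p k - x) := fun k hk => by
    rw [eval_nodal_at_node hk, sub_zero, partialFractionCoeff_eq_neg_nodalWeight_mul hk,
      ← neg_sub x, neg_div_neg_eq, div_eq_mul_inv]
    ring
  have hD : eval x (nodal s p) ≠ 0 := eval_nodal_not_at_node hx
  have hprod : ∏ k ∈ s, (q k - x) / (p k - x) = eval x (nodal s q) / eval x (nodal s p) := by
    rw [eval_nodal, eval_nodal, ← prod_div_distrib]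
    exact prod_congr rfl fun k _ => by rw [← neg_sub x, ← neg_sub x (p k), neg_div_neg_eq]
  rw [sum_congr rfl hterm] at hinterp
  rw [hprod, div_eq_iff hD]
  linear_combination hinterp

theorem partialFractionCoeff_range_succ {p q : ℕ → F} {n k : ℕ} (hk : k < n) :
    partialFractionCoeff (range (n + 1)) p q k
      = partialFractionCoeff (range n) p q k * ((q n - p k) / (p n - p k)) := by
  rw [partialFractionCoeff, partialFractionCoeff, range_add_one,
    erase_insert_of_ne (by omega), prod_insert (by simp)]
  ring

theorem sum_partialFractionCoeff_div (hp : Set.InjOn p s) (hp0 : ∀ k ∈ s, p k ≠ 0) :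
    ∑ k ∈ s, partialFractionCoeff s p q k / p k = ∏ k ∈ s, q k / p k - 1 := by
  have hpf := prod_div_sub_eq_one_add_sum (q := q) hp (x := 0) fun k hk => (hp0 k hk).symm
  simp only [sub_zero] at hpf
  rw [hpf, add_sub_cancel_left]

theorem sum_partialFractionCoeff_div_div_sub (hp : Set.InjOn p s) (hp0 : ∀ k ∈ s, p k ≠ 0)
    {x : F} (hx : ∀ k ∈ s, x ≠ p k) (hx0 : x ≠ 0) :
    ∑ k ∈ s, partialFractionCoeff s p q k / p k / (x - p k)
      = (∏ k ∈ s, q k / p k - ∏ k ∈ s, (q k - x) / (p k - x)) / x := by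
  rw [prod_div_sub_eq_one_add_sum hp hx,
    sub_eq_iff_eq_add'.1 (sum_partialFractionCoeff_div hp hp0).symm, add_sub_add_left_eq_sub,
    ← sum_sub_distrib, sum_div]
  refine sum_congr rfl fun k hk => ?_
  have := sub_ne_zero.2 (hx k hk)
  have := sub_ne_zero.2 (hx k hk).symm
  have := hp0 k hk
  field_simp
  ring

end PartialFractions

theorem one_add_sum_le_prod_one_add {ι R : Type*} [CommSemiring R] [PartialOrder R]
    [IsOrderedRing R] {s : Finset ι} {f : ι → R} (hf : ∀ i ∈ s, 0 ≤ f i) :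
    1 + ∑ i ∈ s, f i ≤ ∏ i ∈ s, (1 + f i) := by
  classical
  induction s using Finset.induction_on with
  | empty => simp
  | insert a s ha ih =>
    rw [sum_insert ha, prod_insert ha]
    have hs := ih fun i hi => hf i (mem_insert_of_mem hi)
    have ha0 := hf a (mem_insert_self a s)
    have hs0 := sum_nonneg fun i hi => hf i (mem_insert_of_mem hi)
    calc 1 + (f a + ∑ i ∈ s, f i)
        ≤ 1 + (f a + ∑ i ∈ s, f i) + f a * ∑ i ∈ s, f i :=
          le_add_of_nonneg_right (mul_nonneg ha0 hs0)
      _ = (1 + f a) * (1 + ∑ i ∈ s, f i) := by ring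
      _ ≤ (1 + f a) * ∏ i ∈ s, (1 + f i) :=
          mul_le_mul_of_nonneg_left hs (add_nonneg zero_le_one ha0)

theorem exists_tendsto_of_le_succ_of_le {u : ℕ → ℝ} {M : ℝ} (N : ℕ)
    (hmono : ∀ n, N ≤ n → u n ≤ u (n + 1)) (hbdd : ∀ n, N ≤ n → u n ≤ M) :
    ∃ L, Tendsto u atTop (𝓝 L) ∧ ∀ n, N ≤ n → u n ≤ L := by
  have hv : Monotone fun m => u (m + N) :=
    monotone_nat_of_le_succ fun m => by simpa [Nat.add_right_comm] using hmono (m + N) (by omega)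
  have hbdd' : BddAbove (Set.range fun m => u (m + N)) :=
    ⟨M, Set.forall_mem_range.2 fun m => hbdd _ (by omega)⟩
  refine ⟨⨆ m, u (m + N), (tendsto_add_atTop_iff_nat N).1 (tendsto_atTop_ciSup hv hbdd'),
    fun n hn => ?_⟩
  simpa [Nat.sub_add_cancel hn] using le_ciSup hbdd' (n - N)

theorem hasSum_of_tendsto_sum_range {f : ℕ → ℕ → ℝ} {g : ℕ → ℝ} {a : ℝ} (N : ℕ)
    (hf : ∀ n k, N ≤ k → k < n → 0 ≤ f n k ∧ f n k ≤ g k)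
    (hg : ∀ k, Tendsto (fun n => f n k) atTop (𝓝 (g k)))
    (ha : Tendsto (fun n => ∑ k ∈ range n, f n k) atTop (𝓝 a)) : HasSum g a := by
  set b := a - ∑ k ∈ range N, g k
  have hf_tail : Tendsto (fun n => ∑ k ∈ Ico N n, f n k) atTop (𝓝 b) := by
    refine (ha.sub (tendsto_finsetSum _ fun k _ => hg k)).congr' ?_
    filter_upwards [eventually_ge_atTop N] with n hn
    rw [← sum_range_add_sum_Ico _ hn, add_sub_cancel_left]
  have hg_tail_le : ∀ K, ∑ k ∈ Ico N K, g k ≤ b := fun K => by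
    refine le_of_tendsto_of_tendsto (tendsto_finsetSum _ fun k _ => hg k) hf_tail ?_
    filter_upwards [eventually_ge_atTop K] with n hn
    exact sum_le_sum_of_subset_of_nonneg (Ico_subset_Ico_right hn) fun k hk _ =>
      (hf n k (mem_Ico.1 hk).1 (mem_Ico.1 hk).2).1
  have hg_tail : Tendsto (fun K => ∑ k ∈ Ico N K, g k) atTop (𝓝 b) :=
    tendsto_of_tendsto_of_tendsto_of_le_of_le hf_tail tendsto_const_nhds
      (fun n => sum_le_sum fun k hk => (hf n k (mem_Ico.1 hk).1 (mem_Ico.1 hk).2).2) hg_tail_le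
  rw [← hasSum_nat_add_iff' N, hasSum_iff_tendsto_nat_of_nonneg fun m =>
    (hf (m + N + 1) (m + N) (by omega) (by omega)).1.trans (hf _ _ (by omega) (by omega)).2]
  refine (hg_tail.comp (tendsto_add_atTop_nat N)).congr fun K => ?_
  simp only [Function.comp, sum_Ico_eq_sum_range, Nat.add_sub_cancel, add_comm N]

theorem HasSum.le_sum_range_of_nonpos {f : ℕ → ℝ} {a : ℝ} (hf : HasSum f a) (n : ℕ)
    (hneg : ∀ k, n ≤ k → f k ≤ 0) : a ≤ ∑ k ∈ range n, f k := by
  have htail := (hasSum_nat_add_iff' n).2 hf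
  linarith [hasSum_le (fun k => hneg (k + n) (Nat.le_add_left n k)) htail hasSum_zero]

def Interlaces (γ χ : ℕ → ℝ) : Prop := ∀ k, γ k < χ k ∧ χ k < γ (k + 1)

namespace Interlaces

variable {γ χ : ℕ → ℝ} {j k m n : ℕ}

theorem strictMono_left (h : Interlaces γ χ) : StrictMono γ :=
  strictMono_nat_of_lt_succ fun k => (h k).1.trans (h k).2

theorem strictMono_right (h : Interlaces γ χ) : StrictMono χ :=
  strictMono_nat_of_lt_succ fun k => (h k).2.trans (h (k + 1)).1

theorem left_lt_right_of_le (h : Interlaces γ χ) (hkj : k ≤ j) : γ k < χ j :=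
  (h.strictMono_left.monotone hkj).trans_lt (h j).1

theorem right_lt_left_of_lt (h : Interlaces γ χ) (hjk : j < k) : χ j < γ k :=
  (h j).2.trans_le (h.strictMono_left.monotone hjk)

theorem left_ne_right (h : Interlaces γ χ) (k j : ℕ) : γ k ≠ χ j :=
  (le_or_gt k j).elim (fun hkj => (h.left_lt_right_of_le hkj).ne)
    fun hjk => (h.right_lt_left_of_lt hjk).ne'

theorem partialFractionCoeff_pos (h : Interlaces γ χ) (n k : ℕ) :
    0 < partialFractionCoeff (range n) γ χ k := by
  refine mul_pos (sub_pos.2 (h k).1) (prod_pos fun j hj => ?_)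
  rcases lt_or_gt_of_ne (ne_of_mem_erase hj) with hjk | hkj
  · exact div_pos_of_neg_of_neg (sub_neg.2 (h.right_lt_left_of_lt hjk))
      (sub_neg.2 (h.strictMono_left hjk))
  · exact div_pos (sub_pos.2 (h.left_lt_right_of_le hkj.le)) (sub_pos.2 (h.strictMono_left hkj))

theorem partialFractionCoeff_le_succ (h : Interlaces γ χ) (hk : k < n) :
    partialFractionCoeff (range n) γ χ k ≤ partialFractionCoeff (range (n + 1)) γ χ k := by
  rw [partialFractionCoeff_range_succ hk]
  refine le_mul_of_one_le_right (h.partialFractionCoeff_pos n k).le ?_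
  rw [one_le_div (sub_pos.2 (h.strictMono_left hk))]
  linarith [(h n).1]

theorem sum_partialFractionCoeff_div_sub (h : Interlaces γ χ) (hj : j < n) :
    ∑ k ∈ range n, partialFractionCoeff (range n) γ χ k / (γ k - χ j) = -1 := by
  have hpf := prod_div_sub_eq_one_add_sum (s := range n) (q := χ)
    h.strictMono_left.injective.injOn (x := χ j) fun k _ => (h.left_ne_right k j).symm
  rw [prod_eq_zero (mem_range.2 hj) (by rw [sub_self, zero_div])] at hpf
  linear_combination -hpf

theorem prod_div_le_prod_sub_div_sub (h : Interlaces γ χ) (hγ : ∀ k, 0 < γ k) (hnm : n ≤ m) :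
    ∏ i ∈ range n, γ i / χ i ≤ ∏ i ∈ range n, (γ i - γ m) / (χ i - γ m) := by
  refine prod_le_prod (fun i _ => (div_pos (hγ i) ((hγ i).trans (h i).1)).le) fun i hi => ?_
  have him : i < m := (mem_range.1 hi).trans_le hnm
  rw [← neg_sub (γ m), ← neg_sub (γ m), neg_div_neg_eq,
    div_le_div_iff₀ ((hγ i).trans (h i).1) (sub_pos.2 (h.right_lt_left_of_lt him))]
  nlinarith [(h i).1, hγ m]

theorem neg_mul_prod_sub_one_le_sum (h : Interlaces γ χ) (hγ : ∀ k, 0 < γ k) {C : ℝ}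
    {ν : ℕ → ℝ} (hν : ∀ k, 0 ≤ ν k) (heq : ∀ j, HasSum (fun k => ν k / (γ k - χ j)) C) (n : ℕ) :
    -C * (∏ k ∈ range n, χ k / γ k - 1) ≤ ∑ k ∈ range n, ν k / γ k := by
  set s := range n
  set ρ := ∏ i ∈ s, γ i / χ i
  set Φ : ℝ → ℝ := fun x => ∏ i ∈ s, (γ i - x) / (χ i - x)
  have hχ : Set.InjOn χ s := h.strictMono_right.injective.injOn
  have hχ0 : ∀ i ∈ s, χ i ≠ 0 := fun i _ => ((hγ i).trans (h i).1).ne'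
  -- `Φ` has the roles of `γ` and `χ` swapped; its residues turn the equations into a test of `ν`
  -- against `(ρ - Φ (γ k)) / γ k`, which is `ρ / γ k` for `k < n` and `≤ 0` for `k ≥ n`.
  have hcomb : HasSum (fun k => ν k * ((ρ - Φ (γ k)) / γ k)) (C * (ρ - 1)) := by
    have hsum := hasSum_sum fun i (_ : i ∈ s) =>
      (heq i).mul_left (partialFractionCoeff s χ γ i / χ i)
    rw [← sum_mul, sum_partialFractionCoeff_div hχ hχ0, mul_comm] at hsum
    refine hsum.congr_fun fun k => ?_
    rw [← sum_partialFractionCoeff_div_div_sub hχ hχ0 (fun i _ => h.left_ne_right k i)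
      (hγ k).ne', mul_sum]
    exact sum_congr rfl fun i _ => by ring
  have hle : C * (ρ - 1) ≤ ρ * ∑ k ∈ s, ν k / γ k := by
    refine (hcomb.le_sum_range_of_nonpos n fun k hk => ?_).trans_eq ?_
    · exact mul_nonpos_of_nonneg_of_nonpos (hν k) (div_nonpos_of_nonpos_of_nonneg
        (sub_nonpos.2 (h.prod_div_le_prod_sub_div_sub hγ hk)) (hγ k).le)
    · rw [mul_sum]
      refine sum_congr rfl fun k hk => ?_
      rw [show Φ (γ k) = 0 from prod_eq_zero hk (by rw [sub_self, zero_div])]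
      ring
  have hρ : ρ * ∏ k ∈ s, χ k / γ k = 1 := by
    rw [← prod_mul_distrib]
    exact prod_eq_one fun k hk => by field_simp [hχ0 k hk, (hγ k).ne']
  have hP : 0 ≤ ∏ k ∈ s, χ k / γ k :=
    prod_nonneg fun k _ => (div_pos ((hγ k).trans (h k).1) (hγ k)).le
  calc -C * (∏ k ∈ s, χ k / γ k - 1) = (∏ k ∈ s, χ k / γ k) * (C * (ρ - 1)) := by
        linear_combination (-C) * hρ
    _ ≤ (∏ k ∈ s, χ k / γ k) * (ρ * ∑ k ∈ s, ν k / γ k) := mul_le_mul_of_nonneg_left hle hP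
    _ = ∑ k ∈ s, ν k / γ k := by linear_combination (∑ k ∈ s, ν k / γ k) * hρ

theorem summable_of_hasSum (h : Interlaces γ χ) (hγ : ∀ k, 0 < γ k) {C : ℝ} (hC : C < 0)
    {ν : ℕ → ℝ} (hν : ∀ k, 0 ≤ ν k) (heq : ∀ j, HasSum (fun k => ν k / (γ k - χ j)) C)
    (hsum : Summable fun k => ν k / γ k) : Summable fun k => χ k / γ k - 1 := by
  have hnonneg : ∀ k, 0 ≤ χ k / γ k - 1 := fun k =>
    sub_nonneg.2 ((one_le_div (hγ k)).2 (h k).1.le)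
  refine summable_of_sum_range_le hnonneg (c := (∑' k, ν k / γ k) / -C) fun n => ?_
  have hprod := one_add_sum_le_prod_one_add fun k (_ : k ∈ range n) => hnonneg k
  simp only [add_sub_cancel] at hprod
  rw [le_div_iff₀ (neg_pos.2 hC)]
  calc (∑ k ∈ range n, (χ k / γ k - 1)) * -C ≤ -C * (∏ k ∈ range n, χ k / γ k - 1) := by
        rw [mul_comm]
        exact mul_le_mul_of_nonneg_left (by linarith) (neg_pos.2 hC).le
    _ ≤ ∑ k ∈ range n, ν k / γ k := h.neg_mul_prod_sub_one_le_sum hγ hν heq n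
    _ ≤ ∑' k, ν k / γ k := hsum.sum_le_tsum _ fun k _ => div_nonneg (hν k) (hγ k).le

theorem exists_hasSum_of_summable (h : Interlaces γ χ) (hγ : ∀ k, 0 < γ k)
    (hs : Summable fun k => χ k / γ k - 1) :
    ∃ L : ℕ → ℝ, (∀ k, 0 < L k) ∧ Summable (fun k => L k / γ k) ∧
      ∀ j, HasSum (fun k => L k / (γ k - χ j)) (-1) := by
  set W : ℕ → ℕ → ℝ := fun n k => partialFractionCoeff (range n) γ χ k
  obtain ⟨P, hP⟩ : ∃ P, Tendsto (fun n => ∏ k ∈ range n, χ k / γ k) atTop (𝓝 P) :=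
    ⟨_, by simpa using (Real.multipliable_one_add_of_summable hs).hasProd.tendsto_prod_nat⟩
  have hsumW : ∀ n, ∑ k ∈ range n, W n k / γ k = ∏ k ∈ range n, χ k / γ k - 1 := fun n =>
    sum_partialFractionCoeff_div h.strictMono_left.injective.injOn fun k _ => (hγ k).ne'
  have hprod_le : ∀ n, ∏ k ∈ range n, χ k / γ k ≤ P := by
    refine Monotone.ge_of_tendsto (monotone_nat_of_le_succ fun n => ?_) hP
    rw [prod_range_succ]
    exact le_mul_of_one_le_right (prod_nonneg fun k _ => (div_pos ((hγ k).trans (h k).1) (hγ k)).le)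
      ((one_le_div (hγ n)).2 (h n).1.le)
  have hW_le : ∀ n k, k + 1 ≤ n → W n k ≤ (P - 1) * γ k := fun n k hk => by
    rw [← div_le_iff₀ (hγ k)]
    calc W n k / γ k ≤ ∑ i ∈ range n, W n i / γ i :=
          single_le_sum (fun i _ => (div_pos (h.partialFractionCoeff_pos n i) (hγ i)).le)
            (mem_range.2 hk)
      _ ≤ P - 1 := by linarith [hsumW n, hprod_le n]
  choose L hWL hLW using fun k => exists_tendsto_of_le_succ_of_le (u := (W · k)) (k + 1)
    (fun n hn => h.partialFractionCoeff_le_succ hn) (hW_le · k)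
  refine ⟨L, fun k => (h.partialFractionCoeff_pos (k + 1) k).trans_le (hLW k (k + 1) le_rfl),
    (hasSum_of_tendsto_sum_range 0 (f := fun n k => W n k / γ k) (fun n k _ hk =>
      ⟨(div_pos (h.partialFractionCoeff_pos n k) (hγ k)).le,
        div_le_div_of_nonneg_right (hLW k n hk) (hγ k).le⟩) (fun k => (hWL k).div_const _)
      (by simpa only [hsumW] using hP.sub_const 1)).summable, fun j => ?_⟩
  refine hasSum_of_tendsto_sum_range (j + 1) (f := fun n k => W n k / (γ k - χ j))
    (fun n k hjk hkn => ?_) (fun k => (hWL k).div_const _) ?_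
  · have hden := sub_pos.2 (h.right_lt_left_of_lt hjk)
    exact ⟨(div_pos (h.partialFractionCoeff_pos n k) hden).le,
      div_le_div_of_nonneg_right (hLW k n hkn) hden.le⟩
  · exact tendsto_const_nhds.congr' ((eventually_gt_atTop j).mono
      fun n hn => (h.sum_partialFractionCoeff_div_sub hn).symm)

end Interlaces

theorem stmt_7_general (γ χ : ℕ → ℝ) (hγpos : ∀ k, 0 < γ k)
    (C : ℝ) (hC : C < 0)
    (hint : ∀ k, γ k < χ k ∧ χ k < γ (k + 1)) :
    (∃ ν : ℕ → ℝ, (∀ k, 0 < ν k) ∧ Summable (fun k => ν k / γ k) ∧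
        ∀ j, (∑' k, ν k / (γ k - χ j)) = C)
      ↔ Summable (fun k => χ k / γ k - 1) := by
  have h : Interlaces γ χ := hint
  constructor
  · rintro ⟨ν, hν, hsum, heq⟩
    have hasSum_eq : ∀ j, HasSum (fun k => ν k / (γ k - χ j)) C := fun j => by
      have hsj : Summable fun k => ν k / (γ k - χ j) := by
        by_contra hns
        linarith [heq j, tsum_eq_zero_of_not_summable hns]
      exact heq j ▸ hsj.hasSum
    exact h.summable_of_hasSum hγpos hC (fun k => (hν k).le) hasSum_eq hsum
  · intro hs
    obtain ⟨L, hL, hLsum, hLeq⟩ := h.exists_hasSum_of_summable hγpos hs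
    refine ⟨fun k => -C * L k, fun k => mul_pos (neg_pos.2 hC) (hL k), ?_, fun j => ?_⟩
    · simpa only [mul_div_assoc] using hLsum.mul_left (-C)
    · simpa only [mul_div_assoc, mul_neg_one, neg_neg] using ((hLeq j).mul_left (-C)).tsum_eq

/-- Nazarov–Yuditskii theorem, case `C < 0`: for positive poles `γ_k ↑ ∞` and points `χ`
interlacing from above (`γ_k < χ_k < γ_{k+1}`), the `χ` arise as solutions of
`∑' ν_k/(γ_k - λ) = C` for some positive weights `ν` with `∑ ν_k/γ_k < ∞`
iff `∑ (χ_k/γ_k - 1) < ∞`. -/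
theorem stmt_7 (γ χ : ℕ → ℝ) (hγ : StrictMono γ) (hγpos : ∀ k, 0 < γ k)
    (hγtop : Filter.Tendsto γ Filter.atTop Filter.atTop)
    (C : ℝ) (hC : C < 0)
    (hint : ∀ k, γ k < χ k ∧ χ k < γ (k + 1)) :
    (∃ ν : ℕ → ℝ, (∀ k, 0 < ν k) ∧ Summable (fun k => ν k / γ k) ∧
        ∀ j, (∑' k, ν k / (γ k - χ j)) = C)
      ↔ Summable (fun k => χ k / γ k - 1) :=
  stmt_7_general γ χ hγpos C hC hint
end

section
/- (Integral form of the Atiyah–Hitchin bracket computation for Weyl functions) Let λ ≠ μ be real, let g : [−2,2] → ℝ be continuous, let 𝒥 : [−2,2] → ℝ be differentiable and nowhere vanishing, let N₀, Ω_λ, Ω_μ be real numbers, and let u, w : [−2,2] → ℝ be twice continuously differentiable functions satisfying u'' + λ g u = 0 and w'' + μ g w = 0 on [−2,2], with boundary data u(−2) = Ω_λ, u'(−2) = −1, w(−2) = Ω_μ, w'(−2) = −1, and N₀ u'(2) + u(2) = 0, N₀ w'(2) + w(2) = 0. Then ∫_{−2}^{2} [ w(ξ)² g(ξ) 𝒥(ξ)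 (u²/𝒥)'(ξ) − u(ξ)² g(ξ) 𝒥(ξ) (w²/𝒥)'(ξ) ] dξ = (Ω_λ − Ω_μ)² / (λ − μ). -/
/-!
The Wronskian `W = u w' - u' w` of the two Weyl solutions satisfies `W' = (λ - μ) g u w`, while the
integrand, after the `𝒥'` terms cancel, equals `-2 g u w W = -(W²)' / (λ - μ)`. The integral is
therefore `(W(-2)² - W(2)²) / (λ - μ)`; the common boundary condition at `2` forces `W(2) = 0`,
and the initial data give `W(-2) = Ω_μ - Ω_λ`.
-/

open Set

noncomputable def wronskian (u w : ℝ → ℝ) (x : ℝ) : ℝ :=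
  u x * deriv w x - deriv u x * w x

theorem wronskian_eq_zero_of_robin {u w : ℝ → ℝ} {x N : ℝ}
    (hu : N * deriv u x + u x = 0) (hw : N * deriv w x + w x = 0) :
    wronskian u w x = 0 := by
  rw [wronskian, eq_neg_of_add_eq_zero_right hu, eq_neg_of_add_eq_zero_right hw]
  ring

theorem sq_mul_deriv_sq_div_sub_sq_mul_deriv_sq_div {u w J : ℝ → ℝ} {x : ℝ} (c : ℝ)
    (hu : DifferentiableAt ℝ u x) (hw : DifferentiableAt ℝ w x) (hJ : DifferentiableAt ℝ J x)
    (hJx : J x ≠ 0) :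
    w x ^ 2 * c * J x * deriv (fun t => u t ^ 2 / J t) x
        - u x ^ 2 * c * J x * deriv (fun t => w t ^ 2 / J t) x
      = -(2 * c * u x * w x * wronskian u w x) := by
  have hdu : deriv (fun t => u t ^ 2 / J t) x
      = (2 * u x ^ 1 * deriv u x * J x - u x ^ 2 * deriv J x) / J x ^ 2 :=
    ((hu.hasDerivAt.pow 2).div hJ.hasDerivAt hJx).deriv
  have hdw : deriv (fun t => w t ^ 2 / J t) x
      = (2 * w x ^ 1 * deriv w x * J x - w x ^ 2 * deriv J x) / J x ^ 2 :=
    ((hw.hasDerivAt.pow 2).div hJ.hasDerivAt hJx).deriv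
  rw [hdu, hdw, wronskian]
  field_simp
  ring

theorem hasDerivAt_wronskian {u w : ℝ → ℝ} {x : ℝ} (hu : ContDiff ℝ 2 u) (hw : ContDiff ℝ 2 w) :
    HasDerivAt (wronskian u w) (u x * deriv (deriv w) x - deriv (deriv u) x * w x) x := by
  have hu' : Differentiable ℝ (deriv u) := (hu.iterate_deriv' 1 1).differentiable (by norm_num)
  have hw' : Differentiable ℝ (deriv w) := (hw.iterate_deriv' 1 1).differentiable (by norm_num)
  have hu₁ := (hu.differentiable (by norm_num) x).hasDerivAt
  have hw₁ := (hw.differentiable (by norm_num) x).hasDerivAt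
  exact ((hu₁.mul (hw' x).hasDerivAt).sub ((hu' x).hasDerivAt.mul hw₁)).congr_deriv (by ring)

theorem hasDerivAt_wronskian_sq_of_ode {u w g : ℝ → ℝ} {lam μ x : ℝ}
    (hu : ContDiff ℝ 2 u) (hw : ContDiff ℝ 2 w)
    (huode : deriv (deriv u) x + lam * g x * u x = 0)
    (hwode : deriv (deriv w) x + μ * g x * w x = 0) :
    HasDerivAt (fun t => wronskian u w t ^ 2)
      ((lam - μ) * (2 * g x * u x * w x * wronskian u w x)) x := by
  refine ((hasDerivAt_wronskian (x := x) hu hw).pow 2).congr_deriv ?_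
  rw [eq_neg_of_add_eq_zero_left huode, eq_neg_of_add_eq_zero_left hwode]
  ring

theorem integral_mul_wronskian_of_ode {u w g : ℝ → ℝ} {lam μ a b : ℝ} (hab : a ≤ b)
    (hg : ContinuousOn g (Icc a b)) (hu : ContDiff ℝ 2 u) (hw : ContDiff ℝ 2 w)
    (huode : ∀ x ∈ Icc a b, deriv (deriv u) x + lam * g x * u x = 0)
    (hwode : ∀ x ∈ Icc a b, deriv (deriv w) x + μ * g x * w x = 0) :
    (lam - μ) * ∫ x in a..b, 2 * g x * u x * w x * wronskian u w x
      = wronskian u w b ^ 2 - wronskian u w a ^ 2 := by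
  rw [← uIcc_of_le hab] at hg
  have hW : Continuous (wronskian u w) :=
    continuous_iff_continuousAt.2 fun x => (hasDerivAt_wronskian hu hw).continuousAt
  have hint : ContinuousOn (fun x => (lam - μ) * (2 * g x * u x * w x * wronskian u w x))
      (uIcc a b) :=
    continuousOn_const.mul ((((continuousOn_const.mul hg).mul hu.continuous.continuousOn).mul
      hw.continuous.continuousOn).mul hW.continuousOn)
  rw [← intervalIntegral.integral_const_mul]
  refine intervalIntegral.integral_eq_sub_of_hasDerivAt (f := fun t => wronskian u w t ^ 2)
    (fun x hx => ?_) hint.intervalIntegrable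
  rw [uIcc_of_le hab] at hx
  exact hasDerivAt_wronskian_sq_of_ode hu hw (huode x hx) (hwode x hx)

/-- Integral form of the Atiyah–Hitchin bracket computation for Weyl functions:
for Weyl solutions `u, w` of the string equation at parameters `λ ≠ μ` with mixed
boundary condition `N₀ χ'(2) + χ(2) = 0` and `χ(-2) = Ω`, `χ'(-2) = -1`,
the integral of the Wronskian-square expression equals `(Ω_λ - Ω_μ)²/(λ - μ)`. -/
theorem stmt_9 (lam μ : ℝ) (hlm : lam ≠ μ) (g J u w : ℝ → ℝ)
    (N₀ Ωl Ωm : ℝ)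
    (hg : ContinuousOn g (Set.Icc (-2) 2))
    (hJ : Differentiable ℝ J) (hJ0 : ∀ ξ ∈ Set.Icc (-2 : ℝ) 2, J ξ ≠ 0)
    (hu : ContDiff ℝ 2 u) (hw : ContDiff ℝ 2 w)
    (huode : ∀ ξ ∈ Set.Icc (-2 : ℝ) 2, deriv (deriv u) ξ + lam * g ξ * u ξ = 0)
    (hwode : ∀ ξ ∈ Set.Icc (-2 : ℝ) 2, deriv (deriv w) ξ + μ * g ξ * w ξ = 0)
    (hu1 : u (-2) = Ωl) (hu2 : deriv u (-2) = -1)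
    (hw1 : w (-2) = Ωm) (hw2 : deriv w (-2) = -1)
    (hubc : N₀ * deriv u 2 + u 2 = 0) (hwbc : N₀ * deriv w 2 + w 2 = 0) :
    ∫ ξ in (-2 : ℝ)..2,
        (w ξ ^ 2 * g ξ * J ξ * deriv (fun t => u t ^ 2 / J t) ξ
          - u ξ ^ 2 * g ξ * J ξ * deriv (fun t => w t ^ 2 / J t) ξ)
      = (Ωl - Ωm) ^ 2 / (lam - μ) := by
  have hab : (-2 : ℝ) ≤ 2 := by norm_num
  have hintegrand : EqOn
      (fun ξ => w ξ ^ 2 * g ξ * J ξ * deriv (fun t => u t ^ 2 / J t) ξ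
        - u ξ ^ 2 * g ξ * J ξ * deriv (fun t => w t ^ 2 / J t) ξ)
      (fun ξ => -(2 * g ξ * u ξ * w ξ * wronskian u w ξ)) (uIcc (-2) 2) := fun ξ hξ =>
    sq_mul_deriv_sq_div_sub_sq_mul_deriv_sq_div (g ξ) (hu.differentiable (by norm_num) ξ)
      (hw.differentiable (by norm_num) ξ) (hJ ξ) (hJ0 ξ (uIcc_of_le hab ▸ hξ))
  have hright : wronskian u w 2 = 0 := wronskian_eq_zero_of_robin hubc hwbc
  have hleft : wronskian u w (-2) = Ωm - Ωl := by
    rw [wronskian, hu1, hu2, hw1, hw2]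
    ring
  have hI := integral_mul_wronskian_of_ode hab hg hu hw huode hwode
  rw [hright, hleft] at hI
  rw [intervalIntegral.integral_congr hintegrand, intervalIntegral.integral_neg,
    eq_div_iff (sub_ne_zero.2 hlm)]
  linear_combination -hI
end

section
/- (Liouville transformation) Let m : ℝ → ℝ be continuous, let λ ∈ ℝ, and let f : ℝ → ℝ be twice differentiable with f''(x) − (1/4) f(x) + λ m(x) f(x) = 0 for all x ∈ ℝ. For ξ ∈ (−2,2) set x(ξ) = 2·artanh(ξ/2), h(ξ) = f(x(ξ)) / cosh(x(ξ)/2), and g(ξ) = m(x(ξ)) · cosh⁴(x(ξ)/2). Then h is twice differentiable on (−2,2) and h''(ξ) + λ g(ξ) h(ξ) = 0 for all ξ ∈ (−2,2). -/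
/-! With `s = 1 / cosh (x / 2) = √(1 - ξ² / 4)` one has `x' = s⁻²`. For any such pair the
first-order terms of `((f ∘ x) s)''` cancel, leaving `(f'' ∘ x) / s³ + (f ∘ x) s''`, and here
`s'' = -1 / (4 s³)`. Hence `h'' = ((f'' - f / 4) ∘ x) / s³ = -λ (m ∘ x) (f ∘ x) / s³ = -λ g h`. -/

open Real Set Filter Topology

section LiouvilleTransform

variable {f f' f'' X s s' s'' : ℝ → ℝ}

theorem hasDerivAt_comp_mul_of_hasDerivAt_inv_sq {ξ a b : ℝ}
    (hf : HasDerivAt f a (X ξ)) (hX : HasDerivAt X (s ξ ^ 2)⁻¹ ξ)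
    (hs : HasDerivAt s b ξ) (hs0 : s ξ ≠ 0) :
    HasDerivAt (fun t ↦ f (X t) * s t) (a / s ξ + f (X ξ) * b) ξ := by
  refine ((hf.comp ξ hX).mul hs).congr_deriv ?_
  simp only [Function.comp]
  field_simp

theorem hasDerivAt_deriv_comp_mul_of_hasDerivAt_inv_sq {U : Set ℝ} (hU : IsOpen U)
    (hf : ∀ y, HasDerivAt f (f' y) y) (hf' : ∀ y, HasDerivAt f' (f'' y) y)
    (hX : ∀ ξ ∈ U, HasDerivAt X (s ξ ^ 2)⁻¹ ξ) (hs : ∀ ξ ∈ U, HasDerivAt s (s' ξ) ξ)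
    (hs' : ∀ ξ ∈ U, HasDerivAt s' (s'' ξ) ξ) (hs0 : ∀ ξ ∈ U, s ξ ≠ 0) {ξ : ℝ} (hξ : ξ ∈ U) :
    HasDerivAt (deriv fun t ↦ f (X t) * s t)
      (f'' (X ξ) / s ξ ^ 3 + f (X ξ) * s'' ξ) ξ := by
  have hderiv : (deriv fun t ↦ f (X t) * s t) =ᶠ[𝓝 ξ]
      fun t ↦ f' (X t) / s t + f (X t) * s' t := by
    filter_upwards [hU.mem_nhds hξ] with t ht
    exact (hasDerivAt_comp_mul_of_hasDerivAt_inv_sq (hf _) (hX t ht) (hs t ht)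
      (hs0 t ht)).deriv
  refine HasDerivAt.congr_of_eventuallyEq ?_ hderiv
  have hX' := hX ξ hξ
  refine ((((hf' _).comp ξ hX').div (hs ξ hξ) (hs0 ξ hξ)).add
    (((hf _).comp ξ hX').mul (hs' ξ hξ))).congr_deriv ?_
  have := hs0 ξ hξ
  simp only [Function.comp]
  field_simp
  ring

end LiouvilleTransform

theorem hasDerivAt_inv_cosh_half {X : ℝ → ℝ} {ξ : ℝ}
    (hX : HasDerivAt X (cosh (X ξ / 2) ^ 2) ξ) :
    HasDerivAt (fun t ↦ (cosh (X t / 2))⁻¹) (-sinh (X ξ / 2) / 2) ξ := by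
  refine ((hX.div_const 2).cosh).inv (cosh_pos _).ne' |>.congr_deriv ?_
  field_simp

theorem hasDerivAt_neg_sinh_half_div_two {X : ℝ → ℝ} {ξ : ℝ}
    (hX : HasDerivAt X (cosh (X ξ / 2) ^ 2) ξ) :
    HasDerivAt (fun t ↦ -sinh (X t / 2) / 2) (-cosh (X ξ / 2) ^ 3 / 4) ξ := by
  refine ((hX.div_const 2).sinh).neg.div_const 2 |>.congr_deriv ?_
  ring

theorem cosh_half_log_div_sq {ξ : ℝ} (hξ : ξ ∈ Ioo (-2 : ℝ) 2) :
    cosh (log ((1 + ξ / 2) / (1 - ξ / 2)) / 2) ^ 2 = (1 - ξ ^ 2 / 4)⁻¹ := by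
  have hξ' : ξ / 2 ∈ Ioo (-1 : ℝ) 1 := by constructor <;> linarith [hξ.1, hξ.2]
  have := cosh_artanh hξ'
  rw [artanh_eq_half_log (Ioo_subset_Icc_self hξ'), one_div_mul_eq_div] at this
  rw [this, div_pow, sq_sqrt (by nlinarith [hξ'.1, hξ'.2])]
  ring

theorem hasDerivAt_log_one_add_div_one_sub {ξ : ℝ} (hξ : ξ ∈ Ioo (-2 : ℝ) 2) :
    HasDerivAt (fun t ↦ log ((1 + t / 2) / (1 - t / 2))) (1 - ξ ^ 2 / 4)⁻¹ ξ := by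
  obtain ⟨h₁, h₂⟩ := hξ
  have hnum : HasDerivAt (fun t : ℝ ↦ 1 + t / 2) (1 / 2) ξ :=
    ((hasDerivAt_id ξ).div_const 2).const_add 1
  have hden : HasDerivAt (fun t : ℝ ↦ 1 - t / 2) (-(1 / 2)) ξ :=
    ((hasDerivAt_id ξ).div_const 2).const_sub 1
  refine ((hnum.div hden (by linarith)).log
    (div_pos (by linarith) (by linarith)).ne').congr_deriv ?_
  have h₃ : 2 + ξ ≠ 0 := by linarith
  have h₄ : 4 - ξ ^ 2 ≠ 0 := by nlinarith
  simp only [Pi.div_apply]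
  field_simp
  ring

theorem stmt_10_general (m : ℝ → ℝ) (lam : ℝ) (f : ℝ → ℝ)
    (hf : Differentiable ℝ f) (hf' : Differentiable ℝ (deriv f))
    (hode : ∀ y : ℝ, deriv (deriv f) y - (1 / 4) * f y + lam * m y * f y = 0)
    (x h g : ℝ → ℝ)
    (hx : ∀ ξ, x ξ = Real.log ((1 + ξ / 2) / (1 - ξ / 2)))
    (hh : ∀ ξ, h ξ = f (x ξ) / Real.cosh (x ξ / 2))
    (hg : ∀ ξ, g ξ = m (x ξ) * Real.cosh (x ξ / 2) ^ 4) :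
    (∀ ξ ∈ Set.Ioo (-2 : ℝ) 2,
        DifferentiableAt ℝ h ξ ∧ DifferentiableAt ℝ (deriv h) ξ) ∧
    (∀ ξ ∈ Set.Ioo (-2 : ℝ) 2, deriv (deriv h) ξ + lam * g ξ * h ξ = 0) := by
  obtain rfl : h = fun ξ ↦ f (x ξ) * (cosh (x ξ / 2))⁻¹ :=
    funext fun ξ ↦ by rw [hh, div_eq_mul_inv]
  have hX : ∀ ξ ∈ Ioo (-2 : ℝ) 2, HasDerivAt x (cosh (x ξ / 2) ^ 2) ξ := fun ξ hξ ↦ by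
    rw [hx ξ, cosh_half_log_div_sq hξ, funext hx]
    exact hasDerivAt_log_one_add_div_one_sub hξ
  have hX' : ∀ ξ ∈ Ioo (-2 : ℝ) 2, HasDerivAt x (((cosh (x ξ / 2))⁻¹ ^ 2)⁻¹) ξ := fun ξ hξ ↦ by
    simpa only [inv_pow, inv_inv] using hX ξ hξ
  have hh'' := fun ξ (hξ : ξ ∈ Ioo (-2 : ℝ) 2) ↦
    hasDerivAt_deriv_comp_mul_of_hasDerivAt_inv_sq isOpen_Ioo
      (fun y ↦ (hf y).hasDerivAt) (fun y ↦ (hf' y).hasDerivAt) hX'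
      (fun ξ hξ ↦ hasDerivAt_inv_cosh_half (hX ξ hξ))
      (fun ξ hξ ↦ hasDerivAt_neg_sinh_half_div_two (hX ξ hξ))
      (fun ξ _ ↦ inv_ne_zero (cosh_pos _).ne') hξ
  refine ⟨fun ξ hξ ↦ ⟨?_, (hh'' ξ hξ).differentiableAt⟩, fun ξ hξ ↦ ?_⟩
  · exact (hasDerivAt_comp_mul_of_hasDerivAt_inv_sq (hf _).hasDerivAt (hX' ξ hξ)
      (hasDerivAt_inv_cosh_half (hX ξ hξ)) (inv_ne_zero (cosh_pos _).ne')).differentiableAt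
  · have := (cosh_pos (x ξ / 2)).ne'
    rw [(hh'' ξ hξ).deriv, hg]
    field_simp
    linear_combination 4 * cosh (x ξ / 2) ^ 3 * hode (x ξ)

/-- Liouville transformation: if `f'' - f/4 + λ m f = 0` on ℝ, then with
`x(ξ) = 2 artanh(ξ/2) = log((1+ξ/2)/(1-ξ/2))`, `h(ξ) = f(x(ξ))/cosh(x(ξ)/2)`,
`g(ξ) = m(x(ξ)) cosh⁴(x(ξ)/2)`, the function `h` is twice differentiable on `(-2,2)`
and satisfies `h'' + λ g h = 0` there. -/
theorem stmt_10 (m : ℝ → ℝ) (hm : Continuous m) (lam : ℝ) (f : ℝ → ℝ)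
    (hf : Differentiable ℝ f) (hf' : Differentiable ℝ (deriv f))
    (hode : ∀ y : ℝ, deriv (deriv f) y - (1 / 4) * f y + lam * m y * f y = 0)
    (x h g : ℝ → ℝ)
    (hx : ∀ ξ, x ξ = Real.log ((1 + ξ / 2) / (1 - ξ / 2)))
    (hh : ∀ ξ, h ξ = f (x ξ) / Real.cosh (x ξ / 2))
    (hg : ∀ ξ, g ξ = m (x ξ) * Real.cosh (x ξ / 2) ^ 4) :
    (∀ ξ ∈ Set.Ioo (-2 : ℝ) 2,
        DifferentiableAt ℝ h ξ ∧ DifferentiableAt ℝ (deriv h) ξ) ∧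
    (∀ ξ ∈ Set.Ioo (-2 : ℝ) 2, deriv (deriv h) ξ + lam * g ξ * h ξ = 0) :=
  stmt_10_general m lam f hf hf' hode x h g hx hh hg
end

section
/- (Transformation of the resolvent kernel under the Liouville substitution) Let m : ℝ → ℝ be continuous and nonnegative with ∫_ℝ m(x) e^{|x|} dx < ∞, and define v(x) = (1/2) ∫_ℝ e^{−|x−y|} m(y) dy. For ξ ∈ (−2,2) set x(ξ) = 2·artanh(ξ/2), k(ξ) = v(x(ξ)) cosh⁴(x(ξ)/2), and g(ξ) = m(x(ξ)) cosh⁴(x(ξ)/2). Then for every ξ ∈ (−2,2): k(ξ) = (1/2) ∫_{−2}^{2} ℛ(ξ,η) g(η) dη, where 𝒥(ξ) = 1 − ξ²/4 and ℛ(ξ,η) = ((1+η/2)/(1+ξ/2))² / 𝒥(ξ) for η ≤ ξ, and ℛ(ξ,η) = ((1−η/2)/(1−ξ/2))² / 𝒥(ξ) for η ≥ ξ. -/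
/-!
The substitution `x(η) = 2 artanh(η/2)` maps `(-2, 2)` onto `ℝ` with `x'(η) = 1/𝒥(η) = cosh²(x(η)/2)`
and `e^{x(η)} = (1 + η/2)/(1 - η/2)`. Changing variables `z = x(η)` in `v = R[m]` therefore turns
`e^{-|x(ξ) - z|}` into a rational function of `ξ, η`; together with `cosh⁴(x/2) = 1/𝒥²`, which
relates `k` to `v` and `g` to `m`, the transformed integrand is exactly `ℛ(ξ, η) g(η)`.
-/

open Real Set MeasureTheory

noncomputable def liouvilleMap (ξ : ℝ) : ℝ := 2 * artanh (ξ / 2)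

noncomputable def liouvilleKernel (ξ η : ℝ) : ℝ :=
  (if η ≤ ξ then ((1 + η / 2) / (1 + ξ / 2)) ^ 2 else ((1 - η / 2) / (1 - ξ / 2)) ^ 2) /
    (1 - ξ ^ 2 / 4)

section

variable {ξ η : ℝ}

lemma div_two_mem_Ioo (hξ : ξ ∈ Ioo (-2 : ℝ) 2) : ξ / 2 ∈ Ioo (-1 : ℝ) 1 :=
  ⟨by linarith [hξ.1], by linarith [hξ.2]⟩

lemma liouvilleMap_eq_log (hξ : ξ ∈ Ioo (-2 : ℝ) 2) :
    liouvilleMap ξ = log ((1 + ξ / 2) / (1 - ξ / 2)) := by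
  rw [liouvilleMap, artanh_eq_half_log (Ioo_subset_Icc_self (div_two_mem_Ioo hξ))]
  ring

lemma exp_liouvilleMap (hξ : ξ ∈ Ioo (-2 : ℝ) 2) :
    exp (liouvilleMap ξ) = (1 + ξ / 2) / (1 - ξ / 2) := by
  rw [liouvilleMap_eq_log hξ, exp_log (div_pos (by linarith [hξ.1]) (by linarith [hξ.2]))]

lemma cosh_half_liouvilleMap_sq (hξ : ξ ∈ Ioo (-2 : ℝ) 2) :
    cosh (liouvilleMap ξ / 2) ^ 2 = 1 / (1 - ξ ^ 2 / 4) := by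
  have hJ : 0 ≤ 1 - (ξ / 2) ^ 2 := by nlinarith [hξ.1, hξ.2]
  rw [liouvilleMap, mul_div_cancel_left₀ _ two_ne_zero, cosh_artanh (div_two_mem_Ioo hξ), div_pow,
    sq_sqrt hJ]
  ring

lemma hasDerivAt_liouvilleMap (hξ : ξ ∈ Ioo (-2 : ℝ) 2) :
    HasDerivAt liouvilleMap (1 / (1 - ξ ^ 2 / 4)) ξ := by
  have hp : 0 < 1 + ξ / 2 := by linarith [hξ.1]
  have hq : 0 < 1 - ξ / 2 := by linarith [hξ.2]
  have hlog : HasDerivAt (fun t => log (1 + t / 2) - log (1 - t / 2))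
      ((1 / 2) / (1 + ξ / 2) - (-(1 / 2)) / (1 - ξ / 2)) ξ :=
    (((hasDerivAt_id ξ).div_const 2).const_add 1 |>.log hp.ne').sub
      (((hasDerivAt_id ξ).div_const 2).const_sub 1 |>.log hq.ne')
  have heq : liouvilleMap =ᶠ[nhds ξ] fun t => log (1 + t / 2) - log (1 - t / 2) := by
    filter_upwards [isOpen_Ioo.mem_nhds hξ] with t ht
    rw [liouvilleMap_eq_log ht, log_div (by linarith [ht.1]) (by linarith [ht.2])]
  refine (hlog.congr_of_eventuallyEq heq).congr_deriv ?_
  have h₁ : 2 + ξ ≠ 0 := by linarith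
  have h₂ : 2 - ξ ≠ 0 := by linarith
  rw [show 1 - ξ ^ 2 / 4 = (2 + ξ) * (2 - ξ) / 4 by ring]
  field_simp
  ring

lemma strictMonoOn_liouvilleMap : StrictMonoOn liouvilleMap (Ioo (-2 : ℝ) 2) :=
  fun _ hs _ ht hst => mul_lt_mul_of_pos_left
    (strictMonoOn_artanh (div_two_mem_Ioo hs) (div_two_mem_Ioo ht) (by linarith)) two_pos

lemma liouvilleMap_image : liouvilleMap '' Ioo (-2 : ℝ) 2 = univ := by
  refine eq_univ_of_forall fun y => ?_
  obtain ⟨s, hs, hsy⟩ := artanh_surjOn (mem_univ (y / 2))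
  refine ⟨2 * s, ⟨by linarith [hs.1], by linarith [hs.2]⟩, ?_⟩
  rw [liouvilleMap, mul_div_cancel_left₀ _ two_ne_zero, hsy]
  ring

theorem integral_eq_setIntegral_liouvilleMap (f : ℝ → ℝ) :
    ∫ z, f z = ∫ η in Ioo (-2 : ℝ) 2, f (liouvilleMap η) / (1 - η ^ 2 / 4) := by
  rw [← setIntegral_univ, ← liouvilleMap_image,
    integral_image_eq_integral_abs_deriv_smul measurableSet_Ioo
      (fun η hη => (hasDerivAt_liouvilleMap hη).hasDerivWithinAt)
      strictMonoOn_liouvilleMap.injOn]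
  refine setIntegral_congr_fun measurableSet_Ioo fun η hη => ?_
  have hJ : 0 < 1 - η ^ 2 / 4 := by nlinarith [hη.1, hη.2]
  rw [smul_eq_mul, abs_of_pos (one_div_pos.mpr hJ)]
  ring

lemma exp_neg_abs_sub_liouvilleMap_of_le (hξ : ξ ∈ Ioo (-2 : ℝ) 2) (hη : η ∈ Ioo (-2 : ℝ) 2)
    (h : η ≤ ξ) :
    exp (-|liouvilleMap ξ - liouvilleMap η|) =
      (1 + η / 2) * (1 - ξ / 2) / ((1 + ξ / 2) * (1 - η / 2)) := by
  have hmono := strictMonoOn_liouvilleMap.monotoneOn hη hξ h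
  rw [abs_of_nonneg (sub_nonneg.mpr hmono), neg_sub, exp_sub, exp_liouvilleMap hξ,
    exp_liouvilleMap hη]
  have : 0 < 1 - ξ / 2 := by linarith [hξ.2]
  have : 0 < 1 - η / 2 := by linarith [hη.2]
  have : 0 < 1 + ξ / 2 := by linarith [hξ.1]
  field_simp

theorem cosh_pow_four_mul_exp_neg_abs_sub_liouvilleMap (hξ : ξ ∈ Ioo (-2 : ℝ) 2)
    (hη : η ∈ Ioo (-2 : ℝ) 2) :
    cosh (liouvilleMap ξ / 2) ^ 4 * exp (-|liouvilleMap ξ - liouvilleMap η|) / (1 - η ^ 2 / 4) =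
      liouvilleKernel ξ η * cosh (liouvilleMap η / 2) ^ 4 := by
  have hp : 0 < 1 + ξ / 2 := by linarith [hξ.1]
  have hq : 0 < 1 - ξ / 2 := by linarith [hξ.2]
  have hp' : 0 < 1 + η / 2 := by linarith [hη.1]
  have hq' : 0 < 1 - η / 2 := by linarith [hη.2]
  have hJ : ∀ t : ℝ, 1 - t ^ 2 / 4 = (1 + t / 2) * (1 - t / 2) := fun t => by ring
  have hcosh : ∀ t ∈ Ioo (-2 : ℝ) 2, cosh (liouvilleMap t / 2) ^ 4 = (1 / (1 - t ^ 2 / 4)) ^ 2 :=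
    fun t ht => by rw [← cosh_half_liouvilleMap_sq ht]; ring
  rw [hcosh ξ hξ, hcosh η hη, liouvilleKernel, hJ, hJ]
  split_ifs with h
  · rw [exp_neg_abs_sub_liouvilleMap_of_le hξ hη h]
    field_simp
  · rw [abs_sub_comm, exp_neg_abs_sub_liouvilleMap_of_le hη hξ (not_le.mp h).le]
    field_simp

end

theorem resolvent_comp_liouvilleMap (m : ℝ → ℝ) {ξ : ℝ} (hξ : ξ ∈ Ioo (-2 : ℝ) 2) :
    (1 / 2 * ∫ z, exp (-|liouvilleMap ξ - z|) * m z) * cosh (liouvilleMap ξ / 2) ^ 4 =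
      1 / 2 * ∫ η in Ioo (-2 : ℝ) 2,
        liouvilleKernel ξ η * (m (liouvilleMap η) * cosh (liouvilleMap η / 2) ^ 4) := by
  rw [mul_assoc, ← integral_mul_const, integral_eq_setIntegral_liouvilleMap]
  congr 1
  refine setIntegral_congr_fun measurableSet_Ioo fun η hη => ?_
  linear_combination m (liouvilleMap η) * cosh_pow_four_mul_exp_neg_abs_sub_liouvilleMap hξ hη

theorem stmt_12_general (m : ℝ → ℝ)
    (v : ℝ → ℝ)
    (hv : ∀ y : ℝ, v y = (1 / 2) * ∫ z : ℝ, Real.exp (-|y - z|) * m z)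
    (x k g J : ℝ → ℝ) (R : ℝ → ℝ → ℝ)
    (hx : ∀ ξ, x ξ = Real.log ((1 + ξ / 2) / (1 - ξ / 2)))
    (hk : ∀ ξ, k ξ = v (x ξ) * Real.cosh (x ξ / 2) ^ 4)
    (hg : ∀ ξ, g ξ = m (x ξ) * Real.cosh (x ξ / 2) ^ 4)
    (hJ : ∀ ξ, J ξ = 1 - ξ ^ 2 / 4)
    (hR1 : ∀ ξ η, η ≤ ξ → R ξ η = ((1 + η / 2) / (1 + ξ / 2)) ^ 2 / J ξ)
    (hR2 : ∀ ξ η, ξ ≤ η → R ξ η = ((1 - η / 2) / (1 - ξ / 2)) ^ 2 / J ξ) :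
    ∀ ξ ∈ Set.Ioo (-2 : ℝ) 2,
      k ξ = (1 / 2) * ∫ η in Set.Ioo (-2 : ℝ) 2, R ξ η * g η := by
  intro ξ hξ
  have hxL : EqOn x liouvilleMap (Ioo (-2) 2) := fun t ht =>
    (hx t).trans (liouvilleMap_eq_log ht).symm
  have hRK : ∀ η, R ξ η = liouvilleKernel ξ η := fun η => by
    rw [liouvilleKernel, ← hJ]
    split_ifs with h
    exacts [hR1 ξ η h, hR2 ξ η (not_le.mp h).le]
  rw [hk, hv, hxL hξ, resolvent_comp_liouvilleMap m hξ]
  congr 1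
  refine setIntegral_congr_fun measurableSet_Ioo fun η hη => ?_
  rw [hRK, hg, hxL hη]

/-- Transformation of the resolvent kernel under the Liouville substitution:
with `v = R[m]`, `x(ξ) = 2 artanh(ξ/2) = log((1+ξ/2)/(1-ξ/2))`,
`k(ξ) = v(x(ξ)) cosh⁴(x(ξ)/2)`, `g(ξ) = m(x(ξ)) cosh⁴(x(ξ)/2)`, one has
`k(ξ) = (1/2) ∫_{-2}^{2} ℛ(ξ,η) g(η) dη` on `(-2,2)`, where `ℛ` is the
transformed kernel of `R`. -/
theorem stmt_12 (m : ℝ → ℝ) (hm : Continuous m) (hm0 : ∀ y, 0 ≤ m y)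
    (hint : MeasureTheory.Integrable (fun y => m y * Real.exp |y|))
    (v : ℝ → ℝ)
    (hv : ∀ y : ℝ, v y = (1 / 2) * ∫ z : ℝ, Real.exp (-|y - z|) * m z)
    (x k g J : ℝ → ℝ) (R : ℝ → ℝ → ℝ)
    (hx : ∀ ξ, x ξ = Real.log ((1 + ξ / 2) / (1 - ξ / 2)))
    (hk : ∀ ξ, k ξ = v (x ξ) * Real.cosh (x ξ / 2) ^ 4)
    (hg : ∀ ξ, g ξ = m (x ξ) * Real.cosh (x ξ / 2) ^ 4)
    (hJ : ∀ ξ, J ξ = 1 - ξ ^ 2 / 4)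
    (hR1 : ∀ ξ η, η ≤ ξ → R ξ η = ((1 + η / 2) / (1 + ξ / 2)) ^ 2 / J ξ)
    (hR2 : ∀ ξ η, ξ ≤ η → R ξ η = ((1 - η / 2) / (1 - ξ / 2)) ^ 2 / J ξ) :
    ∀ ξ ∈ Set.Ioo (-2 : ℝ) 2,
      k ξ = (1 / 2) * ∫ η in Set.Ioo (-2 : ℝ) 2, R ξ η * g η :=
  stmt_12_general m v hv x k g J R hx hk hg hJ hR1 hR2
end

section
/- (Self-adjointness of the transformed resolvent with weight 𝒥³) Let 𝒥(ξ) = 1 − ξ²/4 and let ℛ(ξ,η) = ((1+η/2)/(1+ξ/2))²/𝒥(ξ) for η ≤ ξ and ℛ(ξ,η) = ((1−η/2)/(1−ξ/2))²/𝒥(ξ) for η ≥ ξ, and define ℛ[g](ξ) = (1/2)∫_{−2}^{2} ℛ(ξ,η) g(η) dη. Then for all continuous functions f, g : [−2,2] → ℝ: ∫_{−2}^{2} ℛ[g](ξ) f(ξ) 𝒥(ξ)³ dξ = ∫_{−2}^{2} g(ξ) ℛ[f](ξ) 𝒥(ξ)³ dξ. -/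
open MeasureTheory Set

/-!
Multiplying by the weight `𝒥(ξ)³ = ((1 - ξ/2)(1 + ξ/2))³` clears the denominators of `ℛ(ξ, η)`
and leaves the kernel `((1 + min ξ η / 2)(1 - max ξ η / 2))²`, which is symmetric in `ξ` and `η`.
Self-adjointness is then Fubini on the square `(-2, 2)²`.
-/

theorem setIntegral_symmetric_kernel_mul_comm {α : Type*} [MeasurableSpace α] {μ : Measure α}
    [SFinite μ] {s : Set α} {K : α → α → ℝ} (hK : ∀ x y, K x y = K y x) {f g : α → ℝ}
    (hint : IntegrableOn (fun p : α × α => K p.1 p.2 * g p.2 * f p.1) (s ×ˢ s) (μ.prod μ)) :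
    ∫ x in s, (∫ y in s, K x y * g y ∂μ) * f x ∂μ
      = ∫ x in s, g x * ∫ y in s, K x y * f y ∂μ ∂μ := by
  rw [IntegrableOn, ← Measure.prod_restrict] at hint
  calc ∫ x in s, (∫ y in s, K x y * g y ∂μ) * f x ∂μ
      = ∫ x in s, ∫ y in s, K x y * g y * f x ∂μ ∂μ := by
        simp only [integral_mul_const]
    _ = ∫ y in s, ∫ x in s, K x y * g y * f x ∂μ ∂μ := integral_integral_swap hint
    _ = ∫ x in s, g x * ∫ y in s, K x y * f y ∂μ ∂μ := by
        simp only [← integral_const_mul]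
        congr 1 with x
        congr 1 with y
        rw [hK]
        ring

noncomputable def greenKernel (ξ η : ℝ) : ℝ := ((1 + min ξ η / 2) * (1 - max ξ η / 2)) ^ 2

theorem greenKernel_comm (ξ η : ℝ) : greenKernel ξ η = greenKernel η ξ := by
  simp only [greenKernel, min_comm, max_comm]

theorem continuous_greenKernel : Continuous fun p : ℝ × ℝ => greenKernel p.1 p.2 := by
  unfold greenKernel
  fun_prop

theorem mul_jacobian_cube_eq_greenKernel {J : ℝ → ℝ} (hJ : ∀ ξ, J ξ = 1 - ξ ^ 2 / 4)
    {R : ℝ → ℝ → ℝ}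
    (hR1 : ∀ ξ η, η ≤ ξ → R ξ η = ((1 + η / 2) / (1 + ξ / 2)) ^ 2 / J ξ)
    (hR2 : ∀ ξ η, ξ ≤ η → R ξ η = ((1 - η / 2) / (1 - ξ / 2)) ^ 2 / J ξ)
    {ξ : ℝ} (hξ : ξ ∈ Ioo (-2) 2) (η : ℝ) : R ξ η * J ξ ^ 3 = greenKernel ξ η := by
  have hplus : 2 + ξ ≠ 0 := by linarith [hξ.1]
  have hminus : 2 - ξ ≠ 0 := by linarith [hξ.2]
  have hJξ : J ξ = (1 - ξ / 2) * (1 + ξ / 2) := by rw [hJ]; ring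
  rcases le_total η ξ with h | h
  · rw [hR1 ξ η h, greenKernel, min_eq_right h, max_eq_left h, hJξ]
    field_simp
  · rw [hR2 ξ η h, greenKernel, min_eq_left h, max_eq_right h, hJξ]
    field_simp

/-- Self-adjointness of the transformed resolvent with weight `𝒥³`: for the kernel
`ℛ` obtained from `(1/2)e^{-|x-y|}` under the Liouville substitution and any continuous
`f, g` on `[-2,2]`, `∫ ℛ[g] f 𝒥³ dξ = ∫ g ℛ[f] 𝒥³ dξ`. -/
theorem stmt_14 (J : ℝ → ℝ) (hJ : ∀ ξ, J ξ = 1 - ξ ^ 2 / 4)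
    (R : ℝ → ℝ → ℝ)
    (hR1 : ∀ ξ η, η ≤ ξ → R ξ η = ((1 + η / 2) / (1 + ξ / 2)) ^ 2 / J ξ)
    (hR2 : ∀ ξ η, ξ ≤ η → R ξ η = ((1 - η / 2) / (1 - ξ / 2)) ^ 2 / J ξ)
    (f g : ℝ → ℝ)
    (hf : ContinuousOn f (Set.Icc (-2) 2)) (hg : ContinuousOn g (Set.Icc (-2) 2)) :
    ∫ ξ in Set.Ioo (-2 : ℝ) 2,
        ((1 / 2) * ∫ η in Set.Ioo (-2 : ℝ) 2, R ξ η * g η) * f ξ * J ξ ^ 3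
      = ∫ ξ in Set.Ioo (-2 : ℝ) 2,
        g ξ * ((1 / 2) * ∫ η in Set.Ioo (-2 : ℝ) 2, R ξ η * f η) * J ξ ^ 3 := by
  have weighted : ∀ ξ ∈ Ioo (-2 : ℝ) 2, ∀ h : ℝ → ℝ,
      (∫ η in Ioo (-2 : ℝ) 2, R ξ η * h η) * J ξ ^ 3
        = ∫ η in Ioo (-2 : ℝ) 2, greenKernel ξ η * h η := fun ξ hξ h => by
    rw [← integral_mul_const]
    congr 1 with η
    rw [← mul_jacobian_cube_eq_greenKernel hJ hR1 hR2 hξ η]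
    ring
  have hint : IntegrableOn (fun p : ℝ × ℝ => greenKernel p.1 p.2 * g p.2 * f p.1)
      (Ioo (-2) 2 ×ˢ Ioo (-2) 2) (volume.prod volume) := by
    rw [← Measure.volume_eq_prod]
    refine IntegrableOn.mono_set ?_ (prod_mono Ioo_subset_Icc_self Ioo_subset_Icc_self)
    refine ContinuousOn.integrableOn_compact (isCompact_Icc.prod isCompact_Icc) ?_
    exact (continuous_greenKernel.continuousOn.mul (hg.comp continuousOn_snd fun p hp => hp.2)).mul
      (hf.comp continuousOn_fst fun p hp => hp.1)
  calc _ = ∫ ξ in Ioo (-2 : ℝ) 2, 1 / 2 * ((∫ η in Ioo (-2 : ℝ) 2, greenKernel ξ η * g η) * f ξ) :=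
        setIntegral_congr_fun measurableSet_Ioo fun ξ hξ => by rw [← weighted ξ hξ]; ring
    _ = ∫ ξ in Ioo (-2 : ℝ) 2, 1 / 2 * (g ξ * ∫ η in Ioo (-2 : ℝ) 2, greenKernel ξ η * f η) := by
        rw [integral_const_mul, integral_const_mul,
          setIntegral_symmetric_kernel_mul_comm greenKernel_comm hint]
    _ = _ := setIntegral_congr_fun measurableSet_Ioo fun ξ hξ => by rw [← weighted ξ hξ]; ring
end

section
/- (Explicit pure two-peakon solution) Let p̄₁ > p̄₂ > 0, β > 0, Q₀ ∈ ℝ, and set A = p̄₁ − p̄₂, P = p̄₁ + p̄₂. Define p(t) = A(1 − β e^{At})/(1 + β e^{At}), q(t) = log( A² β e^{At} / ((p̄₁ + p̄₂ β e^{At})(p̄₂ + p̄₁ β e^{At})) ), and Q(t) = Q₀ + Pt − log((p̄₁ + p̄₂ β e^{At})/(p̄₂ + p̄₁ β e^{At})) + log((p̄₁ + β p̄₂)/(p̄₂ + β p̄₁)). Then for all t ∈ ℝ: q(t) < 0, q'(t) = p(t)(1 − e^{q(t)}), p'(t) = −(1/2)(P² − p(t)²) e^{q(t)}, and Q'(t)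 = P(1 + e^{q(t)}). -/
/-!
Write `u = β e^{At}`, so that `u' = A u` and `e^q = A² u / ((p̄₁ + p̄₂ u)(p̄₂ + p̄₁ u))`.
Since `(p̄₁ + p̄₂ u)(p̄₂ + p̄₁ u) - A² u = p̄₁ p̄₂ (1 + u)² > 0`, we get `q < 0`, and each equation of
the system becomes, after the chain rule, a rational identity in `u`; the one for `p'` rests on
`P² - p² = 4 (p̄₁ + p̄₂ u)(p̄₂ + p̄₁ u) / (1 + u)²`.
-/

open Real

section TwoPeakon

variable {a b : ℝ} {u : ℝ → ℝ} {t : ℝ}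

lemma log_two_peakon_ratio_neg (hb : 0 < b) (hab : b < a) {x : ℝ} (hx : 0 < x) :
    log ((a - b) ^ 2 * x / ((a + b * x) * (b + a * x))) < 0 := by
  have ha : 0 < a := hb.trans hab
  have hab' : 0 < a - b := sub_pos.2 hab
  have gap : (a + b * x) * (b + a * x) - (a - b) ^ 2 * x = a * b * (1 + x) ^ 2 := by ring
  refine log_neg (by positivity) ((div_lt_one (by positivity)).2 ?_)
  linarith [gap, (by positivity : 0 < a * b * (1 + x) ^ 2)]

lemma hasDerivAt_const_mul_exp (β c t : ℝ) :
    HasDerivAt (fun s => β * exp (c * s)) (c * (β * exp (c * t))) t :=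
  (((hasDerivAt_id t).const_mul c).exp.const_mul β).congr_deriv (by simp only [id, mul_one]; ring)

lemma hasDerivAt_two_peakon_p (ha : 0 < a) (hb : 0 < b)
    (hu : HasDerivAt u ((a - b) * u t) t) (hu0 : 0 < u t) :
    HasDerivAt (fun s => (a - b) * (1 - u s) / (1 + u s))
      (-(1 / 2) * ((a + b) ^ 2 - ((a - b) * (1 - u t) / (1 + u t)) ^ 2)
        * ((a - b) ^ 2 * u t / ((a + b * u t) * (b + a * u t)))) t := by
  have hD1 : a + b * u t ≠ 0 := by positivity
  have hD2 : b + a * u t ≠ 0 := by positivity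
  have h1u : 1 + u t ≠ 0 := by positivity
  refine (((hu.const_sub 1).const_mul (a - b)).fun_div (hu.const_add 1) h1u).congr_deriv ?_
  field_simp
  ring

lemma hasDerivAt_two_peakon_q (ha : 0 < a) (hb : 0 < b) (hab : a ≠ b)
    (hu : HasDerivAt u ((a - b) * u t) t) (hu0 : 0 < u t) :
    HasDerivAt (fun s => log ((a - b) ^ 2 * u s / ((a + b * u s) * (b + a * u s))))
      ((a - b) * (1 - u t) / (1 + u t)
        * (1 - (a - b) ^ 2 * u t / ((a + b * u t) * (b + a * u t)))) t := by
  have hab' : a - b ≠ 0 := sub_ne_zero.2 hab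
  have hD1 : a + b * u t ≠ 0 := by positivity
  have hD2 : b + a * u t ≠ 0 := by positivity
  have h1u : 1 + u t ≠ 0 := by positivity
  refine (((hu.const_mul ((a - b) ^ 2)).fun_div (((hu.const_mul b).const_add a).fun_mul
    ((hu.const_mul a).const_add b)) (mul_ne_zero hD1 hD2)).log (by positivity)).congr_deriv ?_
  field_simp
  ring

lemma hasDerivAt_two_peakon_Q (ha : 0 < a) (hb : 0 < b) (c d : ℝ)
    (hu : HasDerivAt u ((a - b) * u t) t) (hu0 : 0 < u t) :
    HasDerivAt (fun s => c + (a + b) * s - log ((a + b * u s) / (b + a * u s)) + d)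
      ((a + b) * (1 + (a - b) ^ 2 * u t / ((a + b * u t) * (b + a * u t)))) t := by
  have hD1 : a + b * u t ≠ 0 := by positivity
  have hD2 : b + a * u t ≠ 0 := by positivity
  refine (((((hasDerivAt_id t).const_mul (a + b)).const_add c).sub
    ((((hu.const_mul b).const_add a).fun_div ((hu.const_mul a).const_add b) hD2).log
      (div_ne_zero hD1 hD2))).add_const d).congr_deriv ?_
  simp only [mul_one]
  field_simp
  ring

end TwoPeakon

/-- Explicit pure two-peakon solution: the stated formulas for `p`, `q`, `Q` satisfy
`q < 0` and solve the reduced two-peakon system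
`q' = p(1 - e^q)`, `p' = -(1/2)(P² - p²)e^q`, `Q' = P(1 + e^q)`. -/
theorem stmt_15 (p1 p2 : ℝ) (h12 : p2 < p1) (h2 : 0 < p2)
    (β : ℝ) (hβ : 0 < β) (Q₀ : ℝ) (A P : ℝ)
    (hA : A = p1 - p2) (hP : P = p1 + p2)
    (p q Q : ℝ → ℝ)
    (hp : ∀ t, p t = A * (1 - β * Real.exp (A * t)) / (1 + β * Real.exp (A * t)))
    (hq : ∀ t, q t = Real.log (A ^ 2 * β * Real.exp (A * t)
        / ((p1 + p2 * β * Real.exp (A * t)) * (p2 + p1 * β * Real.exp (A * t)))))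
    (hQ : ∀ t, Q t = Q₀ + P * t
        - Real.log ((p1 + p2 * β * Real.exp (A * t)) / (p2 + p1 * β * Real.exp (A * t)))
        + Real.log ((p1 + β * p2) / (p2 + β * p1))) :
    ∀ t : ℝ, q t < 0
      ∧ HasDerivAt q (p t * (1 - Real.exp (q t))) t
      ∧ HasDerivAt p (-(1 / 2) * (P ^ 2 - p t ^ 2) * Real.exp (q t)) t
      ∧ HasDerivAt Q (P * (1 + Real.exp (q t))) t := by
  subst hA hP
  -- regroup `x * β * exp _` as `x * (β * exp _)`, exposing `u s = β * exp ((p1 - p2) * s)`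
  simp only [mul_assoc] at hq hQ
  obtain rfl := funext hp
  obtain rfl := funext hq
  obtain rfl := funext hQ
  intro t
  have hp1 : 0 < p1 := h2.trans h12
  have hu := hasDerivAt_const_mul_exp β (p1 - p2) t
  have hu0 : 0 < β * exp ((p1 - p2) * t) := by positivity
  rw [exp_log (by positivity)]
  exact ⟨log_two_peakon_ratio_neg h2 h12 hu0,
    hasDerivAt_two_peakon_q hp1 h2 h12.ne' hu hu0, hasDerivAt_two_peakon_p hp1 h2 hu hu0,
    hasDerivAt_two_peakon_Q hp1 h2 _ _ hu hu0⟩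
end

section
/- (Conservation of the reduced two-peakon Hamiltonian) Let I ⊆ ℝ be an interval and let P, Q, p, q : I → ℝ be differentiable functions with q(t) ≠ 0 for all t ∈ I, satisfying P' = 0, Q' = P(1 + e^{−|q|}), p' = (1/2)(P² − p²) sign(q) e^{−|q|}, q' = p(1 − e^{−|q|}). Then the function H(t) = (1/4)[ P(t)² + p(t)² + (P(t)² − p(t)²) e^{−|q(t)|} ] is constant on I. -/
/-!
With `E = e^{-|q|}` one has `∂H/∂P = P(1 + E)/2`, `∂H/∂p = p(1 - E)/2` and
`∂H/∂q = -(P² - p²) sign(q) E / 4`, so the system reads `P' = 0`, `q' = 2 ∂H/∂p`,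
`p' = -2 ∂H/∂q`: it is Hamiltonian in the conjugate pair `(q, p)` (with time rescaled by 2), and
`H' = ∂H/∂p · p' + ∂H/∂q · q'` vanishes. Away from `q = 0` everything is differentiable, and a
function with zero derivative on an interval is constant there.
-/

theorem HasDerivAt.abs_of_ne_zero {f : ℝ → ℝ} {f' t : ℝ} (hf : HasDerivAt f f' t)
    (h₀ : f t ≠ 0) : HasDerivAt (fun u => |f u|) (Real.sign (f t) * f') t := by
  rcases h₀.lt_or_gt with hneg | hpos
  · simpa [Function.comp_def, Real.sign_of_neg hneg] using (hasDerivAt_abs_neg hneg).comp t hf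
  · simpa [Function.comp_def, Real.sign_of_pos hpos] using (hasDerivAt_abs_pos hpos).comp t hf

theorem Set.OrdConnected.eq_of_hasDerivAt_eq_zero {E : Type*} [NormedAddCommGroup E]
    [NormedSpace ℝ E] {I : Set ℝ} (hI : I.OrdConnected) {f : ℝ → E}
    (hf : ∀ t ∈ I, HasDerivAt f 0 t) {s t : ℝ} (hs : s ∈ I) (ht : t ∈ I) : f s = f t := by
  have h := hI.convex.norm_image_sub_le_of_norm_hasDerivWithin_le (C := 0)
    (fun x hx => (hf x hx).hasDerivWithinAt) (fun _ _ => by rw [norm_zero]) ht hs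
  rwa [zero_mul, norm_le_zero_iff, sub_eq_zero] at h

noncomputable def twoPeakonHamiltonian (P p q : ℝ) : ℝ :=
  (1 / 4) * (P ^ 2 + p ^ 2 + (P ^ 2 - p ^ 2) * Real.exp (-|q|))

theorem HasDerivAt.twoPeakonHamiltonian {P p q : ℝ → ℝ} {P' p' q' t : ℝ}
    (hP : HasDerivAt P P' t) (hp : HasDerivAt p p' t) (hq : HasDerivAt q q' t) (hq₀ : q t ≠ 0) :
    HasDerivAt (fun u => twoPeakonHamiltonian (P u) (p u) (q u))
      (P t * (1 + Real.exp (-|q t|)) / 2 * P' + p t * (1 - Real.exp (-|q t|)) / 2 * p'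
        - (P t ^ 2 - p t ^ 2) * Real.sign (q t) * Real.exp (-|q t|) / 4 * q') t := by
  have hE := (hq.abs_of_ne_zero hq₀).fun_neg.exp
  exact ((((hP.fun_pow 2).fun_add (hp.fun_pow 2)).fun_add
    (((hP.fun_pow 2).fun_sub (hp.fun_pow 2)).fun_mul hE)).const_mul (1 / 4)).congr_deriv (by ring)

theorem stmt_16_general (I : Set ℝ) (hI : I.OrdConnected)
    (P p q : ℝ → ℝ) (hq0 : ∀ t ∈ I, q t ≠ 0)
    (hP : ∀ t ∈ I, HasDerivAt P 0 t)
    (hp : ∀ t ∈ I, HasDerivAt p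
      ((1 / 2) * (P t ^ 2 - p t ^ 2) * Real.sign (q t) * Real.exp (-|q t|)) t)
    (hq : ∀ t ∈ I, HasDerivAt q (p t * (1 - Real.exp (-|q t|))) t) :
    ∀ s ∈ I, ∀ t ∈ I,
      (1 / 4) * (P s ^ 2 + p s ^ 2 + (P s ^ 2 - p s ^ 2) * Real.exp (-|q s|))
        = (1 / 4) * (P t ^ 2 + p t ^ 2 + (P t ^ 2 - p t ^ 2) * Real.exp (-|q t|)) := by
  have hH : ∀ t ∈ I, HasDerivAt (fun u => twoPeakonHamiltonian (P u) (p u) (q u)) 0 t := by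
    intro t ht
    exact ((hP t ht).twoPeakonHamiltonian (hp t ht) (hq t ht) (hq0 t ht)).congr_deriv (by ring)
  exact fun s hs t ht => hI.eq_of_hasDerivAt_eq_zero hH hs ht

/-- Conservation of the reduced two-peakon Hamiltonian
`H = (1/4)(P² + p² + (P² - p²)e^{-|q|})` along the reduced two-peakon system. -/
theorem stmt_16 (I : Set ℝ) (hI : I.OrdConnected)
    (P Q p q : ℝ → ℝ) (hq0 : ∀ t ∈ I, q t ≠ 0)
    (hP : ∀ t ∈ I, HasDerivAt P 0 t)
    (hQ : ∀ t ∈ I, HasDerivAt Q (P t * (1 + Real.exp (-|q t|))) t)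
    (hp : ∀ t ∈ I, HasDerivAt p
      ((1 / 2) * (P t ^ 2 - p t ^ 2) * Real.sign (q t) * Real.exp (-|q t|)) t)
    (hq : ∀ t ∈ I, HasDerivAt q (p t * (1 - Real.exp (-|q t|))) t) :
    ∀ s ∈ I, ∀ t ∈ I,
      (1 / 4) * (P s ^ 2 + p s ^ 2 + (P s ^ 2 - p s ^ 2) * Real.exp (-|q s|))
        = (1 / 4) * (P t ^ 2 + p t ^ 2 + (P t ^ 2 - p t ^ 2) * Real.exp (-|q t|)) :=
  stmt_16_general I hI P p q hq0 hP hp hq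
end

section
/- (First trace coefficient I₁(1,0)) Let m : ℝ → ℝ be continuous with compact support. Define φ₀(x) = cosh(x/2), θ₀(x) = 2 e^{−x/2}, φ₁(x) = −2 ∫_{−∞}^{x} sinh((x−ξ)/2) cosh(ξ/2) m(ξ) dξ, and θ₁(x) = 4 ∫_{x}^{+∞} sinh((x−ξ)/2) e^{−ξ/2} m(ξ) dξ. Then for every x ∈ ℝ: θ₀(x) φ₁'(x) + θ₁(x) φ₀'(x) − θ₀'(x) φ₁(x) − θ₁'(x) φ₀(x) = −∫_ℝ m(ξ)(1 + e^{−ξ}) dξ. -/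
/-!
Expanding `sinh ((x - ξ) / 2)` by the addition formula writes `φ₁` and `θ₁` as combinations of
`cosh (x / 2)`, `sinh (x / 2)` with primitives of compactly supported continuous functions. Since
the kernel vanishes on the diagonal, differentiating only replaces `sinh` by `cosh / 2` in the
kernel. The addition formulas then collapse the left-hand side to
`-2 ∫_{ξ ≤ x} e^{-ξ/2} cosh (ξ/2) m - 2 ∫_{ξ ≥ x} cosh (ξ/2) e^{-ξ/2} m`, and
`2 e^{-ξ/2} cosh (ξ/2) = 1 + e^{-ξ}`. The half-line `[x, ∞)` is reduced to `(-∞, -x]` by `ξ ↦ -ξ`.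
-/

open MeasureTheory Set Real

theorem hasDerivAt_integral_Iic {f : ℝ → ℝ} (hf : Continuous f) (hfi : Integrable f) (x : ℝ) :
    HasDerivAt (fun y => ∫ ξ in Iic y, f ξ) (f x) x := by
  have hsplit : ∀ y : ℝ, ∫ ξ in Iic y, f ξ = (∫ ξ in Iic 0, f ξ) + ∫ ξ in (0 : ℝ)..y, f ξ := by
    intro y
    rw [← intervalIntegral.integral_Iic_sub_Iic hfi.integrableOn hfi.integrableOn]
    ring
  exact ((intervalIntegral.integral_hasDerivAt_right hfi.intervalIntegrable
    hf.aestronglyMeasurable.stronglyMeasurableAtFilter hf.continuousAt).const_add _)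
    |>.congr_of_eventuallyEq (.of_forall hsplit)

theorem integral_Ici_eq_integral_Iic_comp_neg (f : ℝ → ℝ) (y : ℝ) :
    ∫ ξ in Ici y, f ξ = ∫ η in Iic (-y), f (-η) := by
  rw [integral_Ici_eq_integral_Ioi, ← integral_comp_neg_Ioi]
  simp only [neg_neg]

theorem integral_Iic_add_integral_Ici {f : ℝ → ℝ} (hf : Integrable f) (x : ℝ) :
    (∫ ξ in Iic x, f ξ) + ∫ ξ in Ici x, f ξ = ∫ ξ, f ξ := by
  rw [integral_Ici_eq_integral_Ioi,
    intervalIntegral.integral_Iic_add_Ioi hf.integrableOn hf.integrableOn]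

theorem two_mul_exp_neg_mul_cosh (t : ℝ) : 2 * (exp (-t) * cosh t) = 1 + exp (-(2 * t)) := by
  have hinv : exp (-t) * exp t = 1 := by rw [← exp_add, neg_add_cancel, exp_zero]
  have hsq : exp (-t) * exp (-t) = exp (-(2 * t)) := by rw [← exp_add]; ring_nf
  rw [cosh_eq]
  linear_combination hinv + hsq

theorem integral_mul_one_add_exp_neg (m : ℝ → ℝ) :
    ∫ ξ, m ξ * (1 + exp (-ξ)) = 2 * ∫ ξ, exp (-(2⁻¹ * ξ)) * (cosh (2⁻¹ * ξ) * m ξ) := by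
  rw [← integral_const_mul]
  congr with ξ
  have hcosh := two_mul_exp_neg_mul_cosh (2⁻¹ * ξ)
  rw [mul_inv_cancel_left₀ two_ne_zero] at hcosh
  linear_combination (-m ξ) * hcosh

section AdditionFormulas

variable {h : ℝ → ℝ} {s : Set ℝ} (c y : ℝ)

theorem setIntegral_sinh_mul_sub_mul
    (hc : IntegrableOn (fun ξ => cosh (c * ξ) * h ξ) s)
    (hs : IntegrableOn (fun ξ => sinh (c * ξ) * h ξ) s) :
    ∫ ξ in s, sinh (c * (y - ξ)) * h ξ
      = sinh (c * y) * (∫ ξ in s, cosh (c * ξ) * h ξ)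
        - cosh (c * y) * ∫ ξ in s, sinh (c * ξ) * h ξ := by
  rw [← integral_const_mul, ← integral_const_mul,
    ← integral_sub (hc.const_mul _) (hs.const_mul _)]
  congr with ξ
  rw [mul_sub, sinh_sub]
  ring

theorem setIntegral_cosh_mul_sub_mul
    (hc : IntegrableOn (fun ξ => cosh (c * ξ) * h ξ) s)
    (hs : IntegrableOn (fun ξ => sinh (c * ξ) * h ξ) s) :
    ∫ ξ in s, cosh (c * (y - ξ)) * h ξ
      = cosh (c * y) * (∫ ξ in s, cosh (c * ξ) * h ξ)
        - sinh (c * y) * ∫ ξ in s, sinh (c * ξ) * h ξ := by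
  rw [← integral_const_mul, ← integral_const_mul,
    ← integral_sub (hc.const_mul _) (hs.const_mul _)]
  congr with ξ
  rw [mul_sub, cosh_sub]
  ring

theorem exp_neg_mul_setIntegral_cosh_add_setIntegral_sinh
    (hc : IntegrableOn (fun ξ => cosh (c * (y - ξ)) * h ξ) s)
    (hs : IntegrableOn (fun ξ => sinh (c * (y - ξ)) * h ξ) s) :
    exp (-(c * y)) * ((∫ ξ in s, cosh (c * (y - ξ)) * h ξ) + ∫ ξ in s, sinh (c * (y - ξ)) * h ξ)
      = ∫ ξ in s, exp (-(c * ξ)) * h ξ := by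
  rw [← integral_add hc hs, ← integral_const_mul]
  congr with ξ
  rw [← add_mul, cosh_add_sinh, ← mul_assoc, ← exp_add]
  ring_nf

theorem cosh_mul_setIntegral_cosh_sub_sinh_mul_setIntegral_sinh
    (hc : IntegrableOn (fun ξ => cosh (c * (y - ξ)) * h ξ) s)
    (hs : IntegrableOn (fun ξ => sinh (c * (y - ξ)) * h ξ) s) :
    cosh (c * y) * (∫ ξ in s, cosh (c * (y - ξ)) * h ξ)
        - sinh (c * y) * (∫ ξ in s, sinh (c * (y - ξ)) * h ξ)
      = ∫ ξ in s, cosh (c * ξ) * h ξ := by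
  rw [← integral_const_mul, ← integral_const_mul,
    ← integral_sub (hc.const_mul _) (hs.const_mul _)]
  congr with ξ
  rw [← mul_assoc, ← mul_assoc, ← sub_mul, ← cosh_sub]
  ring_nf

end AdditionFormulas

section SinhKernel

variable {h : ℝ → ℝ} (c x : ℝ)

theorem hasDerivAt_integral_Iic_sinh_mul (hh : Continuous h) (hsupp : HasCompactSupport h) :
    HasDerivAt (fun y => ∫ ξ in Iic y, sinh (c * (y - ξ)) * h ξ)
      (c * ∫ ξ in Iic x, cosh (c * (x - ξ)) * h ξ) x := by
  have hint : ∀ g : ℝ → ℝ, Continuous g → Integrable (fun ξ => g ξ * h ξ) := fun g hg =>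
    (hg.mul hh).integrable_of_hasCompactSupport hsupp.mul_left
  have hC := hint (fun ξ => cosh (c * ξ)) (by fun_prop)
  have hS := hint (fun ξ => sinh (c * ξ)) (by fun_prop)
  have hlin : HasDerivAt (fun y => c * y) c x := by simpa using (hasDerivAt_id x).const_mul c
  have hP := hasDerivAt_integral_Iic (by fun_prop) hC x
  have hQ := hasDerivAt_integral_Iic (by fun_prop) hS x
  rw [setIntegral_cosh_mul_sub_mul c x hC.integrableOn hS.integrableOn]
  simp_rw [setIntegral_sinh_mul_sub_mul c _ hC.integrableOn hS.integrableOn]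
  refine ((hlin.sinh.mul hP).sub (hlin.cosh.mul hQ)).congr_deriv ?_
  ring

theorem hasDerivAt_integral_Ici_sinh_mul (hh : Continuous h) (hsupp : HasCompactSupport h) :
    HasDerivAt (fun y => ∫ ξ in Ici y, sinh (c * (y - ξ)) * h ξ)
      (c * ∫ ξ in Ici x, cosh (c * (x - ξ)) * h ξ) x := by
  have hreflect : ∀ y, ∫ ξ in Ici y, sinh (c * (y - ξ)) * h ξ
      = -∫ η in Iic (-y), sinh (c * (-y - η)) * h (-η) := by
    intro y
    rw [integral_Ici_eq_integral_Iic_comp_neg, ← integral_neg]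
    congr with η
    rw [← neg_mul, ← sinh_neg]
    ring_nf
  have hcosh : ∀ η, cosh (c * (x - -η)) = cosh (c * (-x - η)) := fun η => by
    rw [← cosh_neg]; ring_nf
  have hL := hasDerivAt_integral_Iic_sinh_mul c (-x) (hh.comp continuous_neg)
    (hsupp.comp_homeomorph (Homeomorph.neg ℝ))
  rw [funext hreflect]
  refine (hL.comp x (hasDerivAt_neg x)).neg.congr_deriv ?_
  rw [integral_Ici_eq_integral_Iic_comp_neg]
  simp only [Function.comp_apply, hcosh]
  ring

end SinhKernel

/-- First trace coefficient `I₁(1,0)`: for `m` continuous with compact support,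
`θ₀ φ₁' + θ₁ φ₀' - θ₀' φ₁ - θ₁' φ₀ = -∫ m(ξ)(1 + e^{-ξ}) dξ` for every `x`. -/
theorem stmt_17 (m : ℝ → ℝ) (hm : Continuous m) (hsupp : HasCompactSupport m)
    (φ₀ θ₀ φ₁ θ₁ : ℝ → ℝ)
    (hφ₀ : ∀ x, φ₀ x = Real.cosh (x / 2))
    (hθ₀ : ∀ x, θ₀ x = 2 * Real.exp (-x / 2))
    (hφ₁ : ∀ x, φ₁ x
      = -2 * ∫ ξ in Set.Iic x, Real.sinh ((x - ξ) / 2) * Real.cosh (ξ / 2) * m ξ)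
    (hθ₁ : ∀ x, θ₁ x
      = 4 * ∫ ξ in Set.Ici x, Real.sinh ((x - ξ) / 2) * Real.exp (-ξ / 2) * m ξ) :
    ∀ x : ℝ,
      θ₀ x * deriv φ₁ x + θ₁ x * deriv φ₀ x - deriv θ₀ x * φ₁ x - deriv θ₁ x * φ₀ x
        = -∫ ξ : ℝ, m ξ * (1 + Real.exp (-ξ)) := by
  intro x
  set g : ℝ → ℝ := fun ξ => cosh (2⁻¹ * ξ) * m ξ
  set k : ℝ → ℝ := fun ξ => exp (-(2⁻¹ * ξ)) * m ξ
  have hgs : HasCompactSupport g := hsupp.mul_left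
  have hks : HasCompactSupport k := hsupp.mul_left
  have hint : ∀ {f u : ℝ → ℝ}, Continuous f → Continuous u → HasCompactSupport u →
      Integrable (fun ξ => f ξ * u ξ) := fun hf hu hus =>
    (hf.mul hu).integrable_of_hasCompactSupport hus.mul_left
  obtain rfl : φ₀ = fun y => cosh (2⁻¹ * y) := by ext y; rw [hφ₀, div_eq_inv_mul]
  obtain rfl : θ₀ = fun y => 2 * exp (-(2⁻¹ * y)) := by ext y; rw [hθ₀, neg_div, div_eq_inv_mul]
  obtain rfl : φ₁ = fun y => -2 * ∫ ξ in Iic y, sinh (2⁻¹ * (y - ξ)) * g ξ := by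
    ext y; simp only [hφ₁, g, mul_assoc, div_eq_inv_mul]
  obtain rfl : θ₁ = fun y => 4 * ∫ ξ in Ici y, sinh (2⁻¹ * (y - ξ)) * k ξ := by
    ext y; simp only [hθ₁, k, mul_assoc, div_eq_inv_mul, mul_neg]
  have hhalf : HasDerivAt (fun y => 2⁻¹ * y) 2⁻¹ x := by
    simpa using (hasDerivAt_id x).const_mul 2⁻¹
  have hnhalf : HasDerivAt (fun y => -(2⁻¹ * y)) (-2⁻¹) x := hhalf.neg
  rw [hhalf.cosh.deriv, (hnhalf.exp.const_mul 2).deriv,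
    ((hasDerivAt_integral_Iic_sinh_mul _ x (by fun_prop) hgs).const_mul (-2)).deriv,
    ((hasDerivAt_integral_Ici_sinh_mul _ x (by fun_prop) hks).const_mul 4).deriv,
    integral_mul_one_add_exp_neg,
    ← integral_Iic_add_integral_Ici (hint (by fun_prop) (by fun_prop) hgs) x]
  have hL := exp_neg_mul_setIntegral_cosh_add_setIntegral_sinh 2⁻¹ x
    (hint (by fun_prop) (by fun_prop) hgs).integrableOn
    (hint (by fun_prop) (by fun_prop) hgs).integrableOn (s := Iic x)
  have hR := cosh_mul_setIntegral_cosh_sub_sinh_mul_setIntegral_sinh 2⁻¹ x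
    (hint (by fun_prop) (by fun_prop) hks).integrableOn
    (hint (by fun_prop) (by fun_prop) hks).integrableOn (s := Ici x)
  rw [show (fun ξ => cosh (2⁻¹ * ξ) * k ξ) = fun ξ => exp (-(2⁻¹ * ξ)) * g ξ by
    ext ξ; simp only [g, k]; ring] at hR
  beta_reduce
  linear_combination (-2) * hL - 2 * hR
end

section
/- (Explicit peakon–antipeakon solution) Let p̄₁ > 0 > p̄₂, ζ > 0, Q₀ ∈ ℝ, and set A = p̄₁ − p̄₂ > 0, P = p̄₁ + p̄₂, and t* = (1/A) log(1/ζ). Define, for t ≠ t*: p(t) = A(1 + ζ e^{At})/(1 − ζ e^{At}), q(t) = log( A² ζ e^{At} / ((p̄₁ ζ e^{At} − p̄₂)(p̄₁ − p̄₂ ζ e^{At})) ), Q(t) = Q₀ + Pt − log((p̄₁ − p̄₂ ζ e^{At})/(p̄₁ − p̄₂ ζ)) + log((p̄₂ − p̄₁ ζ e^{At})/(p̄₂ − p̄₁ ζ)). Then for all t ≠ t*: q(t) < 0, q'(t) = p(t)(1 − e^{q(t)}), p'(t) = −(1/2)(P² − p(t)²) e^{q(t)}, and Q'(t) = P(1 +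 e^{q(t)}). -/
/-!
Put `u = ζ e^{At}`, so that `u' = A u` and `t = t*` exactly when `u = 1`. Then `p` and `e^q`
are rational functions of `u`, and each equation of the system becomes a polynomial identity
in `u` after the chain rule. The two that carry the content are
`(p̄₁u - p̄₂)(p̄₁ - p̄₂u) - A²u = -p̄₁p̄₂(u - 1)²`, which gives `e^q < 1` because `p̄₁p̄₂ < 0`
and `u ≠ 1`, and `p² - P² = 4(p̄₁u - p̄₂)(p̄₁ - p̄₂u)/(1 - u)²`, which gives the equation for `p'`.
-/

open Real Filter Topology

noncomputable section

namespace PeakonAntipeakon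

/-- `e^q` in terms of `u = ζ e^{At}`, with `a = p̄₁`, `b = p̄₂`. -/
def ratio (a b x : ℝ) : ℝ := (a - b) ^ 2 * x / ((a * x - b) * (a - b * x))

/-- `p` in terms of `u`. -/
def momentum (a b x : ℝ) : ℝ := (a - b) * (1 + x) / (1 - x)

variable {a b x : ℝ}

theorem mul_sub_pos (ha : 0 < a) (hb : b < 0) (hx : 0 < x) : 0 < a * x - b := by
  nlinarith

theorem sub_mul_pos (ha : 0 < a) (hb : b < 0) (hx : 0 < x) : 0 < a - b * x := by
  nlinarith

theorem ratio_pos (ha : 0 < a) (hb : b < 0) (hx : 0 < x) : 0 < ratio a b x := by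
  have hD₁ := mul_sub_pos ha hb hx
  have hD₂ := sub_mul_pos ha hb hx
  have hA : 0 < a - b := by linarith
  unfold ratio
  positivity

theorem one_sub_ratio (ha : 0 < a) (hb : b < 0) (hx : 0 < x) :
    1 - ratio a b x = -(a * b) * (x - 1) ^ 2 / ((a * x - b) * (a - b * x)) := by
  have hD₁ := mul_sub_pos ha hb hx
  have hD₂ := sub_mul_pos ha hb hx
  unfold ratio
  field_simp
  ring

theorem ratio_lt_one (ha : 0 < a) (hb : b < 0) (hx : 0 < x) (hx1 : x ≠ 1) :
    ratio a b x < 1 := by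
  have hD₁ := mul_sub_pos ha hb hx
  have hD₂ := sub_mul_pos ha hb hx
  have hab : 0 < -(a * b) := neg_pos.2 (mul_neg_of_pos_of_neg ha hb)
  have hx1' : 0 < (x - 1) ^ 2 := sq_pos_iff.2 (sub_ne_zero.2 hx1)
  have : 0 < 1 - ratio a b x := by rw [one_sub_ratio ha hb hx]; positivity
  linarith

theorem momentum_sq_sub_sq (hx1 : x ≠ 1) :
    momentum a b x ^ 2 - (a + b) ^ 2 = 4 * ((a * x - b) * (a - b * x)) / (1 - x) ^ 2 := by
  have : 1 - x ≠ 0 := sub_ne_zero.2 hx1.symm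
  unfold momentum
  field_simp
  ring

theorem mul_exp_ne_one {A ζ t : ℝ} (hA : A ≠ 0) (ht : t ≠ 1 / A * log (1 / ζ)) :
    ζ * exp (A * t) ≠ 1 := by
  contrapose! ht
  have : A * t = log (1 / ζ) := by
    rw [← log_exp (A * t), eq_one_div_of_mul_eq_one_right ht]
  field_simp
  linarith

theorem hasDerivAt_mul_exp (A ζ t : ℝ) :
    HasDerivAt (fun s => ζ * exp (A * s)) (A * (ζ * exp (A * t))) t := by
  refine ((((hasDerivAt_id' t).const_mul A).exp).const_mul ζ).congr_deriv ?_
  ring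

variable {u : ℝ → ℝ} {t : ℝ}

theorem hasDerivAt_momentum (ha : 0 < a) (hb : b < 0) (hu : HasDerivAt u ((a - b) * u t) t)
    (hu0 : 0 < u t) (hu1 : u t ≠ 1) :
    HasDerivAt (fun s => momentum a b (u s))
      (-(1 / 2) * ((a + b) ^ 2 - momentum a b (u t) ^ 2) * ratio a b (u t)) t := by
  have h1u : 1 - u t ≠ 0 := sub_ne_zero.2 hu1.symm
  have hD₁ := mul_sub_pos ha hb hu0
  have hD₂ := sub_mul_pos ha hb hu0
  refine (((hu.const_add 1).const_mul (a - b)).div (hu.const_sub 1) h1u).congr_deriv ?_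
  rw [show ∀ m r : ℝ, -(1 / 2) * ((a + b) ^ 2 - m ^ 2) * r = (m ^ 2 - (a + b) ^ 2) * r / 2 from
    fun m r => by ring, momentum_sq_sub_sq hu1, ratio]
  field_simp
  ring

theorem hasDerivAt_log_ratio (ha : 0 < a) (hb : b < 0) (hu : HasDerivAt u ((a - b) * u t) t)
    (hu0 : 0 < u t) (hu1 : u t ≠ 1) :
    HasDerivAt (fun s => log (ratio a b (u s)))
      (momentum a b (u t) * (1 - ratio a b (u t))) t := by
  have h1u : 1 - u t ≠ 0 := sub_ne_zero.2 hu1.symm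
  have hD₁ := mul_sub_pos ha hb hu0
  have hD₂ := sub_mul_pos ha hb hu0
  have hden := ((hu.const_mul a).sub_const b).mul ((hu.const_mul b).const_sub a)
  refine (((hu.const_mul ((a - b) ^ 2)).div hden (mul_pos hD₁ hD₂).ne').log
    (ratio_pos ha hb hu0).ne').congr_deriv ?_
  simp only [Pi.mul_apply, Pi.div_apply]
  rw [one_sub_ratio ha hb hu0, momentum]
  field_simp
  ring

theorem hasDerivAt_center (ha : 0 < a) (hb : b < 0) (hu : HasDerivAt u ((a - b) * u t) t)
    (hu0 : 0 < u t) {c : ℝ} (hc : 0 < c) (Q₀ : ℝ) :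
    HasDerivAt (fun s => Q₀ + (a + b) * s - log ((a - b * u s) / (a - b * c))
        + log ((b - a * u s) / (b - a * c)))
      ((a + b) * (1 + ratio a b (u t))) t := by
  have hD₁ := mul_sub_pos ha hb hu0
  have hD₂ := sub_mul_pos ha hb hu0
  have hc₁ : b - a * c < 0 := by linarith [mul_sub_pos ha hb hc]
  have hc₂ := sub_mul_pos ha hb hc
  have hD₁' : b - a * u t < 0 := by linarith
  have hlog₁ := (((hu.const_mul b).const_sub a).div_const (a - b * c)).log (div_pos hD₂ hc₂).ne'
  have hlog₂ := (((hu.const_mul a).const_sub b).div_const (b - a * c)).log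
    (div_pos_of_neg_of_neg hD₁' hc₁).ne'
  refine (((((hasDerivAt_id' t).const_mul (a + b)).const_add Q₀).sub hlog₁).add hlog₂).congr_deriv ?_
  rw [ratio]
  field_simp [hc₁.ne, hD₁'.ne]
  ring

end PeakonAntipeakon

end

open PeakonAntipeakon

/-- Explicit peakon–antipeakon solution: away from the collision time
`t* = (1/A) log(1/ζ)`, the stated formulas for `p`, `q`, `Q` satisfy `q < 0` and solve
the reduced two-peakon system `q' = p(1 - e^q)`, `p' = -(1/2)(P² - p²)e^q`,
`Q' = P(1 + e^q)`. -/
theorem stmt_19 (p1 p2 : ℝ) (h1 : 0 < p1) (h2 : p2 < 0)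
    (ζ : ℝ) (hζ : 0 < ζ) (Q₀ : ℝ) (A P tstar : ℝ)
    (hA : A = p1 - p2) (hP : P = p1 + p2)
    (htstar : tstar = (1 / A) * Real.log (1 / ζ))
    (p q Q : ℝ → ℝ)
    (hp : ∀ t, t ≠ tstar →
      p t = A * (1 + ζ * Real.exp (A * t)) / (1 - ζ * Real.exp (A * t)))
    (hq : ∀ t, t ≠ tstar →
      q t = Real.log (A ^ 2 * ζ * Real.exp (A * t)
        / ((p1 * ζ * Real.exp (A * t) - p2) * (p1 - p2 * ζ * Real.exp (A * t)))))
    (hQ : ∀ t, t ≠ tstar →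
      Q t = Q₀ + P * t
        - Real.log ((p1 - p2 * ζ * Real.exp (A * t)) / (p1 - p2 * ζ))
        + Real.log ((p2 - p1 * ζ * Real.exp (A * t)) / (p2 - p1 * ζ))) :
    ∀ t : ℝ, t ≠ tstar → q t < 0
      ∧ HasDerivAt q (p t * (1 - Real.exp (q t))) t
      ∧ HasDerivAt p (-(1 / 2) * (P ^ 2 - p t ^ 2) * Real.exp (q t)) t
      ∧ HasDerivAt Q (P * (1 + Real.exp (q t))) t := by
  subst hA hP htstar
  intro t ht
  set u : ℝ → ℝ := fun s => ζ * exp ((p1 - p2) * s)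
  have hu : HasDerivAt u ((p1 - p2) * u t) t := hasDerivAt_mul_exp _ _ _
  have hu0 : 0 < u t := by positivity
  have hu1 : u t ≠ 1 := mul_exp_ne_one (by linarith) ht
  have hq' : ∀ s, s ≠ _ → q s = log (ratio p1 p2 (u s)) := fun s hs => by
    rw [hq s hs]; simp only [u, ratio]; ring_nf
  have hQ' : ∀ s, s ≠ _ → Q s = Q₀ + (p1 + p2) * s - log ((p1 - p2 * u s) / (p1 - p2 * ζ))
      + log ((p2 - p1 * u s) / (p2 - p1 * ζ)) := fun s hs => by
    rw [hQ s hs]; simp only [u]; ring_nf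
  have hexpq : exp (q t) = ratio p1 p2 (u t) := by rw [hq' t ht, exp_log (ratio_pos h1 h2 hu0)]
  have hnear := eventually_ne_nhds ht
  rw [hp t ht, hexpq]
  refine ⟨?_, ?_, ?_, ?_⟩
  · rw [hq' t ht]
    exact log_neg (ratio_pos h1 h2 hu0) (ratio_lt_one h1 h2 hu0 hu1)
  · exact (hasDerivAt_log_ratio h1 h2 hu hu0 hu1).congr_of_eventuallyEq (hnear.mono hq')
  · exact (hasDerivAt_momentum h1 h2 hu hu0 hu1).congr_of_eventuallyEq (hnear.mono hp)
  · exact (hasDerivAt_center h1 h2 hu hu0 hζ Q₀).congr_of_eventuallyEq (hnear.mono hQ')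
end
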